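/- arXiv:2305.17241 — 9 statements merged into one kernel-verified Lean document; each statement's English description precedes it below -/
import Mathlib

section
/- Let V, W be real Hilbert spaces and G ≤ O(V) not acting topologically transitively on the unit sphere S(V). If f : S(V)/∕G → S(W) has optimal bilipschitz bounds α and β (i.e., α·d([u],[v]) ≤ ‖f([u])−f([v])‖ ≤ β·d([u],[v]) with α, β optimal), then the homogeneous extension f* : V/∕G → W defined by f*([cu]) = c·f([u]) for u ∈ S(V), c ≥ 0, has optimal bilipschitz bounds min{α,1} and max{β,1}. -/
/-- The orbit of `x` under a subgroup `G` of the orthogonal group of `V`. -/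
def orbG {V : Type*} [NormedAddCommGroup V] [InnerProductSpace ℝ V]
    (G : Subgroup (V ≃ₗᵢ[ℝ] V)) (x : V) : Set V :=
  {y | ∃ g ∈ G, g x = y}

/-- The metric-quotient distance `d([x],[y]) = inf_{p ∈ [x], q ∈ [y]} ‖p − q‖`. -/
noncomputable def qd {V : Type*} [NormedAddCommGroup V] [InnerProductSpace ℝ V]
    (G : Subgroup (V ≃ₗᵢ[ℝ] V)) (x y : V) : ℝ :=
  sInf {r : ℝ | ∃ p ∈ closure (orbG G x), ∃ q ∈ closure (orbG G y), r = dist p q}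

open Pointwise

section helpers
variable {V : Type*} [NormedAddCommGroup V] [InnerProductSpace ℝ V]
  (G : Subgroup (V ≃ₗᵢ[ℝ] V))

def qdSet (x y : V) : Set ℝ :=
  {r : ℝ | ∃ p ∈ closure (orbG G x), ∃ q ∈ closure (orbG G y), r = dist p q}

lemma qd_eq (x y : V) : qd G x y = sInf (qdSet G x y) := rfl

lemma mem_orbG_self (x : V) : x ∈ orbG G x := ⟨1, G.one_mem, rfl⟩

lemma norm_mem_closure_orbG {x p : V} (hp : p ∈ closure (orbG G x)) : ‖p‖ = ‖x‖ := by
  have h : orbG G x ⊆ {y : V | ‖y‖ = ‖x‖} := by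
    rintro y ⟨g, hg, rfl⟩; exact g.norm_map x
  have hc : IsClosed {y : V | ‖y‖ = ‖x‖} := isClosed_eq continuous_norm continuous_const
  exact closure_minimal h hc hp

lemma qdSet_nonempty (x y : V) : (qdSet G x y).Nonempty :=
  ⟨dist x y, x, subset_closure (mem_orbG_self G x), y, subset_closure (mem_orbG_self G y), rfl⟩

lemma qdSet_bddBelow (x y : V) : BddBelow (qdSet G x y) := by
  refine ⟨0, ?_⟩
  rintro r ⟨p, _, q, _, rfl⟩; exact dist_nonneg

lemma qd_nonneg (x y : V) : 0 ≤ qd G x y :=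
  le_csInf (qdSet_nonempty G x y) (by rintro r ⟨p, _, q, _, rfl⟩; exact dist_nonneg)

lemma qd_le {x y p q : V} (hp : p ∈ closure (orbG G x)) (hq : q ∈ closure (orbG G y)) :
    qd G x y ≤ dist p q :=
  csInf_le (qdSet_bddBelow G x y) ⟨p, hp, q, hq, rfl⟩

lemma qd_le_dist (x y : V) : qd G x y ≤ dist x y :=
  qd_le G (subset_closure (mem_orbG_self G x)) (subset_closure (mem_orbG_self G y))

lemma qd_eq_zero_of_mem_closure {u p : V} (hp : p ∈ closure (orbG G u)) : qd G u p = 0 :=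
  le_antisymm (by simpa using qd_le G hp (subset_closure (mem_orbG_self G p)))
    (qd_nonneg G u p)

lemma qd_comm (x y : V) : qd G x y = qd G y x := by
  unfold qd
  congr 1
  ext r
  constructor
  · rintro ⟨p, hp, q, hq, rfl⟩; exact ⟨q, hq, p, hp, dist_comm p q⟩
  · rintro ⟨p, hp, q, hq, rfl⟩; exact ⟨q, hq, p, hp, dist_comm p q⟩

lemma orbG_smul (c : ℝ) (x : V) : orbG G (c • x) = c • orbG G x := by
  ext y
  constructor
  · rintro ⟨g, hg, rfl⟩
    exact ⟨g x, ⟨g, hg, rfl⟩, (map_smul g c x).symm⟩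
  · rintro ⟨p, ⟨g, hg, rfl⟩, rfl⟩
    exact ⟨g, hg, map_smul g c x⟩

lemma closure_orbG_smul (c : ℝ) (x : V) :
    closure (orbG G (c • x)) = c • closure (orbG G x) := by
  rw [orbG_smul, closure_smul₀]

lemma orbG_zero : orbG G (0 : V) = {0} := by
  ext y
  simp only [orbG, Set.mem_setOf_eq, Set.mem_singleton_iff]
  constructor
  · rintro ⟨g, hg, rfl⟩; exact map_zero g
  · rintro rfl; exact ⟨1, G.one_mem, map_zero _⟩

lemma qd_zero_right (x : V) : qd G x 0 = ‖x‖ := by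
  have h : qdSet G x 0 = {‖x‖} := by
    ext r
    simp only [qdSet, orbG_zero, closure_singleton, Set.mem_singleton_iff, Set.mem_setOf_eq]
    constructor
    · rintro ⟨p, hp, q, rfl, rfl⟩
      rw [dist_zero_right]; exact norm_mem_closure_orbG G hp
    · rintro rfl
      exact ⟨x, subset_closure (mem_orbG_self G x), 0, rfl, (dist_zero_right x).symm⟩
  rw [qd_eq, h, csInf_singleton]

lemma norm_smul_sub_smul_sq {W : Type*} [NormedAddCommGroup W] [InnerProductSpace ℝ W]
    {p q : W} (hp : ‖p‖ = 1) (hq : ‖q‖ = 1) (a b : ℝ) :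
    ‖a • p - b • q‖ ^ 2 = (a - b) ^ 2 + a * b * ‖p - q‖ ^ 2 := by
  have h1 : ‖a • p - b • q‖ ^ 2 =
      ‖a • p‖ ^ 2 - 2 * inner ℝ (a • p) (b • q) + ‖b • q‖ ^ 2 := norm_sub_sq_real _ _
  have h2 : ‖p - q‖ ^ 2 = ‖p‖ ^ 2 - 2 * inner ℝ p q + ‖q‖ ^ 2 := norm_sub_sq_real _ _
  have h3 : inner ℝ (a • p) (b • q) = a * b * inner ℝ p q := by
    rw [real_inner_smul_left, real_inner_smul_right]; ring
  have h4 : ‖a • p‖ ^ 2 = a ^ 2 := by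
    rw [norm_smul, hp, mul_one, Real.norm_eq_abs, sq_abs]
  have h5 : ‖b • q‖ ^ 2 = b ^ 2 := by
    rw [norm_smul, hq, mul_one, Real.norm_eq_abs, sq_abs]
  rw [h1, h3, h4, h5]
  rw [hp, hq] at h2
  nlinarith [h2]

lemma qd_smul_sq_le {a b : ℝ} (ha : 0 < a) (hb : 0 < b) {u v : V}
    (hu : ‖u‖ = 1) (hv : ‖v‖ = 1) :
    (qd G (a • u) (b • v)) ^ 2 ≤ (a - b) ^ 2 + a * b * (qd G u v) ^ 2 := by
  set S := qdSet G u v with hS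
  set f : ℝ → ℝ := fun t => (a - b) ^ 2 + a * b * (max t 0) ^ 2 with hf
  have hmono : Monotone f := by
    intro s t hst
    have h1 : max s 0 ≤ max t 0 := max_le_max hst le_rfl
    have h0 : (0 : ℝ) ≤ max s 0 := le_max_right _ _
    have : (max s 0) ^ 2 ≤ (max t 0) ^ 2 := by nlinarith
    simp only [hf]
    nlinarith [mul_pos ha hb]
  have hcont : Continuous f := by
    apply continuous_const.add
    exact (continuous_const.mul ((continuous_id.max continuous_const).pow 2))
  have key : f (sInf S) = sInf (f '' S) :=
    hmono.map_csInf_of_continuousAt hcont.continuousAt (qdSet_nonempty G u v)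
      (qdSet_bddBelow G u v)
  have hle : (qd G (a • u) (b • v)) ^ 2 ≤ sInf (f '' S) := by
    apply le_csInf ((qdSet_nonempty G u v).image f)
    rintro z ⟨r, ⟨p, hp, q, hq, rfl⟩, rfl⟩
    have hpn : ‖p‖ = 1 := (norm_mem_closure_orbG G hp).trans hu
    have hqn : ‖q‖ = 1 := (norm_mem_closure_orbG G hq).trans hv
    have hpm : a • p ∈ closure (orbG G (a • u)) := by
      rw [closure_orbG_smul]; exact Set.smul_mem_smul_set hp
    have hqm : b • q ∈ closure (orbG G (b • v)) := by
      rw [closure_orbG_smul]; exact Set.smul_mem_smul_set hq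
    have hd : qd G (a • u) (b • v) ≤ dist (a • p) (b • q) := qd_le G hpm hqm
    have hsq : (qd G (a • u) (b • v)) ^ 2 ≤ (dist (a • p) (b • q)) ^ 2 := by
      have h0 := qd_nonneg G (a • u) (b • v)
      nlinarith
    have hid : (dist (a • p) (b • q)) ^ 2 = (a - b) ^ 2 + a * b * ‖p - q‖ ^ 2 := by
      rw [dist_eq_norm]; exact norm_smul_sub_smul_sq hpn hqn a b
    have hmax : max ‖p - q‖ 0 = ‖p - q‖ := max_eq_left (norm_nonneg _)
    have hfz : f (dist p q) = (a - b) ^ 2 + a * b * ‖p - q‖ ^ 2 := by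
      simp only [hf, dist_eq_norm, hmax]
    rw [hfz]
    rw [hid] at hsq
    exact hsq
  rw [← key] at hle
  have hq0 : max (sInf S) 0 = sInf S := max_eq_left (qd_nonneg G u v)
  rw [qd_eq G u v, ← hS]
  simpa only [hf, hq0] using hle

end helpers

set_option maxHeartbeats 1600000 in
/-- if `G ≤ O(V)` does not act topologically transitively on `S(V)` and
`f : S(V)/∕G → S(W)` has optimal bilipschitz bounds `α, β`, then its homogeneous extension
`f* : V/∕G → W`, `f*([cu]) = c·f([u])`, has optimal bilipschitz bounds `min α 1` and
`max β 1`. -/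
theorem homogeneous_extension_optimal_bilipschitz
    {V W : Type*} [NormedAddCommGroup V] [InnerProductSpace ℝ V] [CompleteSpace V] [Nontrivial V]
    [NormedAddCommGroup W] [InnerProductSpace ℝ W] [CompleteSpace W]
    (G : Subgroup (V ≃ₗᵢ[ℝ] V))
    (hnt : ¬ ∃ u : V, ‖u‖ = 1 ∧ Metric.sphere (0 : V) 1 ⊆ closure (orbG G u))
    (F : V → W)
    (hFsph : ∀ u : V, ‖u‖ = 1 → ‖F u‖ = 1)
    (hFinv : ∀ u v : V, ‖u‖ = 1 → ‖v‖ = 1 → qd G u v = 0 → F u = F v)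
    (α β : ℝ)
    (hlow : IsGreatest {c : ℝ | ∀ u v : V, ‖u‖ = 1 → ‖v‖ = 1 →
      c * qd G u v ≤ ‖F u - F v‖} α)
    (hup : IsLeast {c : ℝ | ∀ u v : V, ‖u‖ = 1 → ‖v‖ = 1 →
      ‖F u - F v‖ ≤ c * qd G u v} β)
    (Fstar : V → W)
    (hFstar : ∀ (c : ℝ), 0 ≤ c → ∀ u : V, ‖u‖ = 1 → Fstar (c • u) = c • F u) :
    IsGreatest {c : ℝ | ∀ x y : V, c * qd G x y ≤ ‖Fstar x - Fstar y‖} (min α 1) ∧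
    IsLeast {c : ℝ | ∀ x y : V, ‖Fstar x - Fstar y‖ ≤ c * qd G x y} (max β 1) := by
  classical
  set m := min α 1 with hm_def
  set M := max β 1 with hM_def
  have hM1 : (1 : ℝ) ≤ M := le_max_right _ _
  have hMpos : (0 : ℝ) < M := lt_of_lt_of_le one_pos hM1
  have hm1 : m ≤ 1 := min_le_right _ _
  -- a unit vector
  obtain ⟨v₀, hv₀⟩ := exists_ne (0 : V)
  set u₀ : V := ‖v₀‖⁻¹ • v₀ with hu₀def
  have hu₀ : ‖u₀‖ = 1 := by
    rw [hu₀def, norm_smul, norm_inv, norm_norm, inv_mul_cancel₀ (norm_ne_zero_iff.mpr hv₀)]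
  have hFstar0 : Fstar 0 = 0 := by
    have h := hFstar 0 le_rfl u₀ hu₀
    simpa using h
  have hFstar1 : ∀ u : V, ‖u‖ = 1 → Fstar u = F u := by
    intro u hu
    have h := hFstar 1 zero_le_one u hu
    simpa using h
  -- decomposition of nonzero vectors
  have hdec : ∀ x : V, x ≠ 0 → ∃ a : ℝ, ∃ u : V, 0 < a ∧ ‖u‖ = 1 ∧ x = a • u ∧
      Fstar x = a • F u := by
    intro x hx
    have ha : (0 : ℝ) < ‖x‖ := norm_pos_iff.mpr hx
    refine ⟨‖x‖, ‖x‖⁻¹ • x, ha, ?_, ?_, ?_⟩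
    · rw [norm_smul, norm_inv, norm_norm, inv_mul_cancel₀ (ne_of_gt ha)]
    · rw [smul_inv_smul₀ (ne_of_gt ha)]
    · have hu : ‖(‖x‖⁻¹ • x : V)‖ = 1 := by
        rw [norm_smul, norm_inv, norm_norm, inv_mul_cancel₀ (ne_of_gt ha)]
      have := hFstar ‖x‖ (le_of_lt ha) _ hu
      rwa [smul_inv_smul₀ (ne_of_gt ha)] at this
  have hFstar_norm : ∀ x : V, ‖Fstar x‖ = ‖x‖ := by
    intro x
    by_cases hx : x = 0
    · rw [hx, hFstar0, norm_zero, norm_zero]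
    · obtain ⟨a, u, ha, hu, hxau, hFx⟩ := hdec x hx
      rw [hFx, norm_smul, hFsph u hu, mul_one, hxau, norm_smul, hu, mul_one]
  -- F is M-Lipschitz on the sphere
  have hFlip : ∀ p q : V, ‖p‖ = 1 → ‖q‖ = 1 → ‖F p - F q‖ ≤ M * ‖p - q‖ := by
    intro p q hp hq
    have h := hup.1 p q hp hq
    rcases le_or_gt 0 β with hβ | hβ
    · calc ‖F p - F q‖ ≤ β * qd G p q := h
        _ ≤ β * ‖p - q‖ := by
            have := qd_le_dist G p q
            rw [dist_eq_norm] at this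
            exact mul_le_mul_of_nonneg_left this hβ
        _ ≤ M * ‖p - q‖ := mul_le_mul_of_nonneg_right (le_max_left _ _) (norm_nonneg _)
    · have h0 : ‖F p - F q‖ ≤ 0 :=
        h.trans (mul_nonpos_iff.mpr (Or.inr ⟨le_of_lt hβ, qd_nonneg G p q⟩))
      exact h0.trans (by positivity)
  -- lower membership
  have mem_low : ∀ x y : V, m * qd G x y ≤ ‖Fstar x - Fstar y‖ := by
    have key : ∀ x y : V, x ≠ 0 → y ≠ 0 → m * qd G x y ≤ ‖Fstar x - Fstar y‖ := by
      intro x y hx hy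
      rcases le_or_gt m 0 with hm0 | hm0
      · exact le_trans (mul_nonpos_iff.mpr (Or.inr ⟨hm0, qd_nonneg G x y⟩)) (norm_nonneg _)
      have hmα : m ≤ α := min_le_left _ _
      have hα0 : 0 < α := lt_of_lt_of_le hm0 hmα
      obtain ⟨a, u, ha, hu, hxau, hFx⟩ := hdec x hx
      obtain ⟨b, v, hb, hv, hybv, hFy⟩ := hdec y hy
      have hA : (qd G x y) ^ 2 ≤ (a - b) ^ 2 + a * b * (qd G u v) ^ 2 := by
        rw [hxau, hybv]; exact qd_smul_sq_le G ha hb hu hv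
      have hαf : α * qd G u v ≤ ‖F u - F v‖ := hlow.1 u v hu hv
      have hq0 : 0 ≤ qd G u v := qd_nonneg G u v
      have hid : ‖Fstar x - Fstar y‖ ^ 2 = (a - b) ^ 2 + a * b * ‖F u - F v‖ ^ 2 := by
        rw [hFx, hFy]
        exact norm_smul_sub_smul_sq (hFsph u hu) (hFsph v hv) a b
      have hsq : (m * qd G x y) ^ 2 ≤ ‖Fstar x - Fstar y‖ ^ 2 := by
        have h1 : (α * qd G u v) ^ 2 ≤ ‖F u - F v‖ ^ 2 :=
          pow_le_pow_left₀ (mul_nonneg (le_of_lt hα0) hq0) hαf 2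
        have s2 : m ^ 2 ≤ 1 := by nlinarith
        have s3 : m ^ 2 ≤ α ^ 2 := by nlinarith
        have s1 : (m * qd G x y) ^ 2 ≤ m ^ 2 * ((a - b) ^ 2 + a * b * (qd G u v) ^ 2) := by
          rw [mul_pow]
          exact mul_le_mul_of_nonneg_left hA (sq_nonneg m)
        have s5 : a * b * (α * qd G u v) ^ 2 ≤ a * b * ‖F u - F v‖ ^ 2 :=
          mul_le_mul_of_nonneg_left h1 (mul_nonneg ha.le hb.le)
        have s6 : a * b * (m ^ 2 * (qd G u v) ^ 2) ≤ a * b * (α * qd G u v) ^ 2 := by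
          rw [mul_pow]
          exact mul_le_mul_of_nonneg_left
            (mul_le_mul_of_nonneg_right s3 (sq_nonneg _)) (mul_nonneg ha.le hb.le)
        have s7 : m ^ 2 * (a - b) ^ 2 ≤ (a - b) ^ 2 := by
          nlinarith [sq_nonneg (a - b), sq_nonneg m]
        rw [hid]
        nlinarith [s1, s5, s6, s7]
      have hmq : 0 ≤ m * qd G x y := mul_nonneg (le_of_lt hm0) (qd_nonneg G x y)
      exact (pow_le_pow_iff_left₀ hmq (norm_nonneg _) two_ne_zero).mp hsq
    intro x y
    by_cases hx : x = 0
    · by_cases hy : y = 0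
      · subst hx; subst hy
        simp [qd_zero_right G (0 : V)]
      · subst hx
        rw [hFstar0, zero_sub, norm_neg, hFstar_norm, qd_comm, qd_zero_right]
        calc m * ‖y‖ ≤ 1 * ‖y‖ := mul_le_mul_of_nonneg_right hm1 (norm_nonneg _)
          _ = ‖y‖ := one_mul _
    · by_cases hy : y = 0
      · subst hy
        rw [hFstar0, sub_zero, hFstar_norm, qd_zero_right]
        calc m * ‖x‖ ≤ 1 * ‖x‖ := mul_le_mul_of_nonneg_right hm1 (norm_nonneg _)
          _ = ‖x‖ := one_mul _
      · exact key x y hx hy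
  -- upper membership
  have mem_up : ∀ x y : V, ‖Fstar x - Fstar y‖ ≤ M * qd G x y := by
    have key : ∀ x y : V, x ≠ 0 → y ≠ 0 → ‖Fstar x - Fstar y‖ ≤ M * qd G x y := by
      intro x y hx hy
      obtain ⟨a, u, ha, hu, hxau, hFx⟩ := hdec x hx
      obtain ⟨b, v, hb, hv, hybv, hFy⟩ := hdec y hy
      have hpt : ∀ r ∈ qdSet G x y, ‖Fstar x - Fstar y‖ ≤ M * r := by
        rintro r ⟨p, hp, q, hq, rfl⟩
        rw [hxau] at hp
        rw [hybv] at hq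
        rw [closure_orbG_smul] at hp hq
        obtain ⟨p', hp', rfl⟩ := hp
        obtain ⟨q', hq', rfl⟩ := hq
        have hpn : ‖p'‖ = 1 := (norm_mem_closure_orbG G hp').trans hu
        have hqn : ‖q'‖ = 1 := (norm_mem_closure_orbG G hq').trans hv
        have hFp : F p' = F u :=
          (hFinv u p' hu hpn (qd_eq_zero_of_mem_closure G hp')).symm
        have hFq : F q' = F v :=
          (hFinv v q' hv hqn (qd_eq_zero_of_mem_closure G hq')).symm
        have hlipp : ‖F p' - F q'‖ ≤ M * ‖p' - q'‖ := hFlip p' q' hpn hqn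
        have hid1 : ‖Fstar x - Fstar y‖ ^ 2 = (a - b) ^ 2 + a * b * ‖F p' - F q'‖ ^ 2 := by
          rw [hFx, hFy, ← hFp, ← hFq]
          exact norm_smul_sub_smul_sq (hFp ▸ hFsph u hu) (hFq ▸ hFsph v hv) a b
        have hid2 : (dist (a • p') (b • q')) ^ 2 = (a - b) ^ 2 + a * b * ‖p' - q'‖ ^ 2 := by
          rw [dist_eq_norm]; exact norm_smul_sub_smul_sq hpn hqn a b
        have hsq : ‖Fstar x - Fstar y‖ ^ 2 ≤ (M * dist (a • p') (b • q')) ^ 2 := by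
          have h1 : ‖F p' - F q'‖ ^ 2 ≤ M ^ 2 * ‖p' - q'‖ ^ 2 := by
            have := pow_le_pow_left₀ (norm_nonneg (F p' - F q')) hlipp 2
            rwa [mul_pow] at this
          have hM2 : (1 : ℝ) ≤ M ^ 2 := by nlinarith
          have s5 : a * b * ‖F p' - F q'‖ ^ 2 ≤ a * b * (M ^ 2 * ‖p' - q'‖ ^ 2) :=
            mul_le_mul_of_nonneg_left h1 (mul_nonneg ha.le hb.le)
          have s7 : (a - b) ^ 2 ≤ M ^ 2 * (a - b) ^ 2 := by
            nlinarith [sq_nonneg (a - b)]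
          rw [hid1, mul_pow, hid2]
          nlinarith [s5, s7]
        have hd0 : 0 ≤ M * dist (a • p') (b • q') :=
          mul_nonneg (le_of_lt hMpos) dist_nonneg
        exact (pow_le_pow_iff_left₀ (norm_nonneg _) hd0 two_ne_zero).mp hsq
      have hdiv : ‖Fstar x - Fstar y‖ / M ≤ qd G x y := by
        rw [qd_eq]
        apply le_csInf (qdSet_nonempty G x y)
        intro r hr
        rw [div_le_iff₀ hMpos]
        calc ‖Fstar x - Fstar y‖ ≤ M * r := hpt r hr
          _ = r * M := mul_comm _ _
      calc ‖Fstar x - Fstar y‖ = (‖Fstar x - Fstar y‖ / M) * M := by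
            field_simp
        _ ≤ qd G x y * M := mul_le_mul_of_nonneg_right hdiv (le_of_lt hMpos)
        _ = M * qd G x y := mul_comm _ _
    intro x y
    by_cases hx : x = 0
    · by_cases hy : y = 0
      · subst hx; subst hy; simp [qd_zero_right G (0 : V)]
      · subst hx
        rw [hFstar0, zero_sub, norm_neg, hFstar_norm, qd_comm, qd_zero_right]
        calc ‖y‖ = 1 * ‖y‖ := (one_mul _).symm
          _ ≤ M * ‖y‖ := mul_le_mul_of_nonneg_right hM1 (norm_nonneg _)
    · by_cases hy : y = 0
      · subst hy
        rw [hFstar0, sub_zero, hFstar_norm, qd_zero_right]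
        calc ‖x‖ = 1 * ‖x‖ := (one_mul _).symm
          _ ≤ M * ‖x‖ := mul_le_mul_of_nonneg_right hM1 (norm_nonneg _)
      · exact key x y hx hy
  refine ⟨⟨mem_low, ?_⟩, ⟨mem_up, ?_⟩⟩
  · -- m is greatest
    intro c hc
    have h1 : c ≤ α := by
      apply hlow.2
      intro u v hu hv
      have := hc u v
      rwa [hFstar1 u hu, hFstar1 v hv] at this
    have h2 : c ≤ 1 := by
      have := hc u₀ 0
      rw [hFstar0, sub_zero, hFstar1 u₀ hu₀, hFsph u₀ hu₀, qd_zero_right, hu₀] at this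
      simpa using this
    exact le_min h1 h2
  · -- M is least
    intro c hc
    have h1 : β ≤ c := by
      apply hup.2
      intro u v hu hv
      have := hc u v
      rwa [hFstar1 u hu, hFstar1 v hv] at this
    have h2 : (1 : ℝ) ≤ c := by
      have := hc u₀ 0
      rw [hFstar0, sub_zero, hFstar1 u₀ hu₀, hFsph u₀ hu₀, qd_zero_right, hu₀] at this
      simpa using this
    exact max_le h1 h2
end

section
/- Let V, W be real Hilbert spaces and G ≤ O(V) act topologically transitively on S(V). Then for every map f : S(V)/∕G → S(W), the homogeneous extension f* : V/∕G → W is an isometry. -/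
lemma norm_of_mem_closure_orbG {V : Type*} [NormedAddCommGroup V] [InnerProductSpace ℝ V]
    (G : Subgroup (V ≃ₗᵢ[ℝ] V)) {x p : V} (hp : p ∈ closure (orbG G x)) : ‖p‖ = ‖x‖ := by
  have hsub : orbG G x ⊆ {q : V | ‖q‖ = ‖x‖} := by
    rintro q ⟨g, -, rfl⟩
    exact g.norm_map x
  have hclosed : IsClosed {q : V | ‖q‖ = ‖x‖} :=
    isClosed_eq continuous_norm continuous_const
  exact hclosed.closure_subset_iff.mpr hsub hp

lemma orbit_dense {V : Type*} [NormedAddCommGroup V] [InnerProductSpace ℝ V]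
    (G : Subgroup (V ≃ₗᵢ[ℝ] V))
    (htrans : ∃ u : V, ‖u‖ = 1 ∧ Metric.sphere (0 : V) 1 ⊆ closure (orbG G u))
    {x : V} (hx : ‖x‖ = 1) : Metric.sphere (0 : V) 1 ⊆ closure (orbG G x) := by
  obtain ⟨u, hu, hdense⟩ := htrans
  intro y hy
  rw [Metric.mem_closure_iff]
  intro ε hε
  have hxmem : x ∈ closure (orbG G u) := hdense (by simp [hx])
  have hymem : y ∈ closure (orbG G u) := hdense hy
  rw [Metric.mem_closure_iff] at hxmem hymem
  obtain ⟨p, ⟨g, hg, rfl⟩, hpx⟩ := hxmem (ε/2) (by linarith)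
  obtain ⟨q, ⟨h, hh, rfl⟩, hqy⟩ := hymem (ε/2) (by linarith)
  refine ⟨(h * g⁻¹) x, ⟨h * g⁻¹, mul_mem hh (inv_mem hg), rfl⟩, ?_⟩
  have h1 : (h * g⁻¹) x = h (g⁻¹ x) := rfl
  have h2 : dist (h u) (h (g⁻¹ x)) = dist u (g⁻¹ x) := h.dist_map _ _
  have h3 : dist u (g⁻¹ x) = dist (g u) (g (g⁻¹ x)) := (g.dist_map _ _).symm
  have h4 : g (g⁻¹ x) = x := by
    have : (g * g⁻¹) x = x := by rw [mul_inv_cancel]; rfl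
    simpa using this
  calc dist y ((h * g⁻¹) x) ≤ dist y (h u) + dist (h u) ((h * g⁻¹) x) := dist_triangle _ _ _
    _ = dist y (h u) + dist (g u) x := by rw [h1, h2, h3, h4]
    _ = dist y (h u) + dist x (g u) := by rw [dist_comm (g u) x]
    _ < ε := by linarith

lemma smul_unit_mem_closure_orbG {V : Type*} [NormedAddCommGroup V] [InnerProductSpace ℝ V]
    (G : Subgroup (V ≃ₗᵢ[ℝ] V))
    (htrans : ∃ u : V, ‖u‖ = 1 ∧ Metric.sphere (0 : V) 1 ⊆ closure (orbG G u))
    {u : V} (hu : ‖u‖ = 1) (x : V) : ‖x‖ • u ∈ closure (orbG G x) := by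
  rcases eq_or_ne x 0 with rfl | hx0
  · simp only [norm_zero, zero_smul]
    exact subset_closure ⟨1, one_mem _, by simp⟩
  · have hnx : ‖x‖ ≠ 0 := norm_ne_zero_iff.mpr hx0
    have hxu : ‖(‖x‖⁻¹ • x)‖ = 1 := by
      rw [norm_smul, norm_inv, norm_norm, inv_mul_cancel₀ hnx]
    have hucl : u ∈ closure (orbG G (‖x‖⁻¹ • x)) :=
      orbit_dense G htrans hxu (by simp [hu])
    have hmaps : Set.MapsTo (fun p : V => ‖x‖ • p) (orbG G (‖x‖⁻¹ • x)) (orbG G x) := by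
      rintro p ⟨g, hg, rfl⟩
      refine ⟨g, hg, ?_⟩
      show g x = ‖x‖ • g (‖x‖⁻¹ • x)
      rw [← g.map_smul, smul_smul, mul_inv_cancel₀ hnx, one_smul]
    exact map_mem_closure (continuous_const_smul ‖x‖) hucl hmaps

lemma qd_eq_abs {V : Type*} [NormedAddCommGroup V] [InnerProductSpace ℝ V]
    (G : Subgroup (V ≃ₗᵢ[ℝ] V))
    (htrans : ∃ u : V, ‖u‖ = 1 ∧ Metric.sphere (0 : V) 1 ⊆ closure (orbG G u))
    (x y : V) : qd G x y = |‖x‖ - ‖y‖| := by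
  obtain ⟨u, hu, -⟩ := id htrans
  have hpx : ‖x‖ • u ∈ closure (orbG G x) := smul_unit_mem_closure_orbG G htrans hu x
  have hqy : ‖y‖ • u ∈ closure (orbG G y) := smul_unit_mem_closure_orbG G htrans hu y
  have hdist : dist (‖x‖ • u) (‖y‖ • u) = |‖x‖ - ‖y‖| := by
    rw [dist_eq_norm, ← sub_smul, norm_smul, hu, mul_one, Real.norm_eq_abs]
  have hmem : |‖x‖ - ‖y‖| ∈
      {r : ℝ | ∃ p ∈ closure (orbG G x), ∃ q ∈ closure (orbG G y), r = dist p q} :=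
    ⟨‖x‖ • u, hpx, ‖y‖ • u, hqy, hdist.symm⟩
  have hlb : ∀ r ∈ {r : ℝ | ∃ p ∈ closure (orbG G x), ∃ q ∈ closure (orbG G y), r = dist p q},
      |‖x‖ - ‖y‖| ≤ r := by
    rintro r ⟨p, hp, q, hq, rfl⟩
    calc |‖x‖ - ‖y‖| = |‖p‖ - ‖q‖| := by
          rw [norm_of_mem_closure_orbG G hp, norm_of_mem_closure_orbG G hq]
      _ ≤ ‖p - q‖ := abs_norm_sub_norm_le p q
      _ = dist p q := (dist_eq_norm p q).symm
  exact le_antisymm (csInf_le ⟨_, hlb⟩ hmem) (le_csInf ⟨_, hmem⟩ hlb)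

/-- if `G ≤ O(V)` acts topologically transitively on `S(V)`, then for every
`f : S(V)/∕G → S(W)`, the homogeneous extension `f* : V/∕G → W` is an isometry. -/
theorem homogeneous_extension_isometry_of_topologically_transitive
    {V W : Type*} [NormedAddCommGroup V] [InnerProductSpace ℝ V] [CompleteSpace V]
    [NormedAddCommGroup W] [InnerProductSpace ℝ W] [CompleteSpace W]
    (G : Subgroup (V ≃ₗᵢ[ℝ] V))
    (htrans : ∃ u : V, ‖u‖ = 1 ∧ Metric.sphere (0 : V) 1 ⊆ closure (orbG G u))
    (F : V → W)
    (hFsph : ∀ u : V, ‖u‖ = 1 → ‖F u‖ = 1)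
    (hFinv : ∀ u v : V, ‖u‖ = 1 → ‖v‖ = 1 → qd G u v = 0 → F u = F v)
    (Fstar : V → W)
    (hFstar : ∀ (c : ℝ), 0 ≤ c → ∀ u : V, ‖u‖ = 1 → Fstar (c • u) = c • F u) :
    ∀ x y : V, ‖Fstar x - Fstar y‖ = qd G x y := by
  obtain ⟨u, hu, -⟩ := id htrans
  have hFconst : ∀ v : V, ‖v‖ = 1 → F v = F u := by
    intro v hv
    refine hFinv v u hv hu ?_
    rw [qd_eq_abs G htrans, hv, hu, sub_self, abs_zero]
  have hFstar' : ∀ x : V, Fstar x = ‖x‖ • F u := by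
    intro x
    rcases eq_or_ne x 0 with rfl | hx0
    · have := hFstar 0 le_rfl u hu
      simpa using this
    · have hnx : ‖x‖ ≠ 0 := norm_ne_zero_iff.mpr hx0
      have hxu : ‖(‖x‖⁻¹ • x)‖ = 1 := by
        rw [norm_smul, norm_inv, norm_norm, inv_mul_cancel₀ hnx]
      have hxeq : ‖x‖ • (‖x‖⁻¹ • x) = x := by
        rw [smul_smul, mul_inv_cancel₀ hnx, one_smul]
      have := hFstar ‖x‖ (norm_nonneg x) (‖x‖⁻¹ • x) hxu
      rw [hxeq, hFconst _ hxu] at this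
      exact this
  intro x y
  rw [hFstar' x, hFstar' y, ← sub_smul, norm_smul, hFsph u hu, mul_one,
    Real.norm_eq_abs, qd_eq_abs G htrans]
end

section
/- Let X be a metric space, W a real Hilbert space, and g : X → W bounded with bilipschitz bounds α, β. For each t ∈ (0, 1/‖g‖_∞), the map g_t : X → S(W ⊕ ℝ) defined by g_t(x) = (t·g(x), √(1−‖t·g(x)‖²)) has bilipschitz bounds t·α and (1 − t²‖g‖_∞²)^{−1/2}·t·β. -/
private lemma sqrt_diff_sq_mul_le {a b s : ℝ} (ha0 : 0 ≤ a) (hb0 : 0 ≤ b)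
    (ha : a ≤ s) (hb : b ≤ s) (hs : s < 1) :
    (Real.sqrt (1 - a ^ 2) - Real.sqrt (1 - b ^ 2)) ^ 2 * (1 - s ^ 2) ≤
      s ^ 2 * (a - b) ^ 2 := by
  set A := Real.sqrt (1 - a ^ 2) with hA
  set B := Real.sqrt (1 - b ^ 2) with hB
  set C := Real.sqrt (1 - s ^ 2) with hC
  have hs0 : 0 ≤ s := le_trans ha0 ha
  have hA2 : A ^ 2 = 1 - a ^ 2 := Real.sq_sqrt (by nlinarith)
  have hB2 : B ^ 2 = 1 - b ^ 2 := Real.sq_sqrt (by nlinarith)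
  have hC2 : C ^ 2 = 1 - s ^ 2 := Real.sq_sqrt (by nlinarith)
  have hC0 : 0 ≤ C := Real.sqrt_nonneg _
  have hAC : C ≤ A := Real.sqrt_le_sqrt (by nlinarith)
  have hBC : C ≤ B := Real.sqrt_le_sqrt (by nlinarith)
  have hid : (A - B) ^ 2 * (A + B) ^ 2 = (a ^ 2 - b ^ 2) ^ 2 := by
    rw [← mul_pow]
    have h : (A - B) * (A + B) = b ^ 2 - a ^ 2 := by linear_combination hA2 - hB2
    rw [h]; ring
  have h4 : 4 * C ^ 2 ≤ (A + B) ^ 2 := by nlinarith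
  have hab : (a + b) ^ 2 ≤ 4 * s ^ 2 := by nlinarith
  have key : (A - B) ^ 2 * (4 * C ^ 2) ≤ (A - B) ^ 2 * (A + B) ^ 2 :=
    mul_le_mul_of_nonneg_left h4 (sq_nonneg _)
  nlinarith [sq_nonneg (a - b), sq_nonneg (A - B),
    mul_le_mul_of_nonneg_left hab (sq_nonneg (a - b))]

/-- normalizing lift of a bounded bilipschitz map: if `‖g‖_∞ = M` and
`0 < t` with `t·M < 1` (i.e. `t ∈ (0, 1/‖g‖_∞)`), then
`g_t(x) = (t·g(x), √(1−‖t·g(x)‖²))` maps into `S(W ⊕ ℝ)` and has bilipschitz bounds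
`t·α` and `(1 − t²‖g‖_∞²)^{−1/2}·t·β`. -/
theorem normalizing_lift_bilipschitz_bounds
    {X : Type*} [MetricSpace X] {W : Type*} [NormedAddCommGroup W] [InnerProductSpace ℝ W]
    (g : X → W) (M : ℝ) (hM : IsLUB (Set.range fun x => ‖g x‖) M)
    (α β : ℝ)
    (hb : ∀ x y : X, α * dist x y ≤ ‖g x - g y‖ ∧ ‖g x - g y‖ ≤ β * dist x y)
    (t : ℝ) (ht : 0 < t) (htM : t * M < 1)
    (gt : X → WithLp 2 (W × ℝ))
    (hgt : ∀ x, gt x = (WithLp.equiv 2 (W × ℝ)).symm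
      (t • g x, Real.sqrt (1 - ‖t • g x‖ ^ 2))) :
    (∀ x, ‖gt x‖ = 1) ∧
    (∀ x y : X, t * α * dist x y ≤ ‖gt x - gt y‖ ∧
      ‖gt x - gt y‖ ≤ (Real.sqrt (1 - t ^ 2 * M ^ 2))⁻¹ * (t * β) * dist x y) := by
  have hMx : ∀ x, ‖g x‖ ≤ M := fun x => hM.1 ⟨x, rfl⟩
  have hnorm : ∀ (v : W) (r : ℝ), ‖(WithLp.equiv 2 (W × ℝ)).symm (v, r)‖
      = Real.sqrt (‖v‖ ^ 2 + r ^ 2) := by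
    intro v r
    rw [WithLp.prod_norm_eq_of_L2]
    simp [WithLp.equiv_symm_apply, Real.norm_eq_abs, sq_abs]
  have htg : ∀ x, ‖t • g x‖ = t * ‖g x‖ := by
    intro x
    rw [norm_smul, Real.norm_eq_abs, abs_of_pos ht]
  have htgM : ∀ x, ‖t • g x‖ ≤ t * M := fun x => by
    rw [htg]; exact mul_le_mul_of_nonneg_left (hMx x) ht.le
  constructor
  · intro x
    have h1 : ‖t • g x‖ ^ 2 ≤ 1 := by
      have hM0 : (0:ℝ) ≤ M := le_trans (norm_nonneg _) (hMx x)
      have := htgM x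
      nlinarith [norm_nonneg (t • g x)]
    rw [hgt x, hnorm, Real.sq_sqrt (by linarith), add_sub_cancel, Real.sqrt_one]
  · intro x y
    have hM0 : (0:ℝ) ≤ M := le_trans (norm_nonneg _) (hMx x)
    set s := t * M with hs
    have hs0 : 0 ≤ s := mul_nonneg ht.le hM0
    have hs1 : s < 1 := htM
    have hpos : 0 < 1 - s ^ 2 := by nlinarith
    set a := t * ‖g x - g y‖ with ha
    have ha0 : 0 ≤ a := mul_nonneg ht.le (norm_nonneg _)
    set c := Real.sqrt (1 - ‖t • g x‖ ^ 2) - Real.sqrt (1 - ‖t • g y‖ ^ 2) with hc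
    have hsub : gt x - gt y
        = (WithLp.equiv 2 (W × ℝ)).symm (t • g x - t • g y, c) := by
      rw [hgt x, hgt y, WithLp.equiv_symm_apply, ← WithLp.toLp_sub, Prod.mk_sub_mk]
    have hDa : ‖gt x - gt y‖ = Real.sqrt (a ^ 2 + c ^ 2) := by
      rw [hsub, hnorm, ← smul_sub, norm_smul, Real.norm_eq_abs, abs_of_pos ht]
    -- the key estimate on the last coordinates
    have hkey : c ^ 2 * (1 - s ^ 2) ≤ s ^ 2 * a ^ 2 := by
      rw [hc]
      have h1 := sqrt_diff_sq_mul_le (norm_nonneg (t • g x)) (norm_nonneg (t • g y))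
        (htgM x) (htgM y) hs1
      have h2 : (‖t • g x‖ - ‖t • g y‖) ^ 2 ≤ a ^ 2 := by
        have h3 : |‖t • g x‖ - ‖t • g y‖| ≤ ‖t • g x - t • g y‖ :=
          abs_norm_sub_norm_le _ _
        have h4 : ‖t • g x - t • g y‖ = a := by
          rw [← smul_sub, norm_smul, Real.norm_eq_abs, abs_of_pos ht]
        rw [h4] at h3
        nlinarith [abs_nonneg (‖t • g x‖ - ‖t • g y‖), sq_abs (‖t • g x‖ - ‖t • g y‖)]
      nlinarith [mul_le_mul_of_nonneg_left h2 (sq_nonneg s)]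
    constructor
    · -- lower bound
      have h1 : a ≤ ‖gt x - gt y‖ := by
        rw [hDa]
        calc a = Real.sqrt (a ^ 2) := (Real.sqrt_sq ha0).symm
        _ ≤ Real.sqrt (a ^ 2 + c ^ 2) := Real.sqrt_le_sqrt (by nlinarith [sq_nonneg c])
      have h2 : t * α * dist x y ≤ a := by
        have := (hb x y).1
        rw [ha]
        nlinarith
      linarith
    · -- upper bound
      have hss : s ^ 2 = t ^ 2 * M ^ 2 := by rw [hs]; ring
      have h1 : ‖gt x - gt y‖ ≤ (Real.sqrt (1 - s ^ 2))⁻¹ * a := by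
        have hP : (1 - s ^ 2) * (a ^ 2 + c ^ 2) ≤ a ^ 2 := by nlinarith [hkey]
        have h0 := mul_le_mul_of_nonneg_left hP (inv_nonneg.mpr hpos.le)
        rw [← mul_assoc, inv_mul_cancel₀ hpos.ne', one_mul] at h0
        calc ‖gt x - gt y‖ = Real.sqrt (a ^ 2 + c ^ 2) := hDa
          _ ≤ Real.sqrt ((1 - s ^ 2)⁻¹ * a ^ 2) := Real.sqrt_le_sqrt h0
          _ = (Real.sqrt (1 - s ^ 2))⁻¹ * a := by
              rw [Real.sqrt_mul (by positivity), Real.sqrt_inv, Real.sqrt_sq ha0]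
      have h2 : (Real.sqrt (1 - s ^ 2))⁻¹ * a
          ≤ (Real.sqrt (1 - s ^ 2))⁻¹ * (t * β) * dist x y := by
        rw [mul_assoc]
        apply mul_le_mul_of_nonneg_left _ (by positivity)
        rw [ha, mul_assoc]
        exact mul_le_mul_of_nonneg_left (hb x y).2 ht.le
      rw [← hss]
      linarith
end

section
/- Let V be a real Hilbert space of dimension at least 2 and G = {±id} ≤ O(V). The map f : S(V)/G → S(V ⊗ V) defined by f([x]) = x ⊗ x has optimal bilipschitz bounds 1 and √2; equivalently, for unit vectors x, y with [x] ≠ [y], the ratio ‖x⊗x − y⊗y‖ / min{‖x−y‖, ‖x+y‖} equals √(1 + |⟨x,y⟩|) ∈ [1, √2). -/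
open scoped RealInnerProductSpace

private lemma min_norm_eq {V : Type*} [NormedAddCommGroup V] [InnerProductSpace ℝ V]
    (x y : V) (hx : ‖x‖ = 1) (hy : ‖y‖ = 1) :
    min ‖x - y‖ ‖x + y‖ = Real.sqrt (2 - 2 * |⟪x, y⟫|) := by
  have h1 : ‖x - y‖ = Real.sqrt (2 - 2 * ⟪x, y⟫) := by
    rw [← Real.sqrt_sq (norm_nonneg (x - y)), norm_sub_sq_real, hx, hy]; ring_nf
  have h2 : ‖x + y‖ = Real.sqrt (2 + 2 * ⟪x, y⟫) := by
    rw [← Real.sqrt_sq (norm_nonneg (x + y)), norm_add_sq_real, hx, hy]; ring_nf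
  have hmono : Monotone Real.sqrt := fun a b h => Real.sqrt_le_sqrt h
  rw [h1, h2, ← hmono.map_min]
  congr 1
  rcases le_or_gt 0 (⟪x, y⟫ : ℝ) with h | h
  · rw [abs_of_nonneg h, min_eq_left (by linarith)]
  · rw [abs_of_neg h, min_eq_right (by linarith)]; ring

private lemma sqrt_split (t : ℝ) :
    Real.sqrt (2 - 2 * t ^ 2) = Real.sqrt (2 - 2 * |t|) * Real.sqrt (1 + |t|) := by
  rw [← Real.sqrt_mul' _ (by positivity : (0:ℝ) ≤ 1 + |t|)]
  congr 1
  rw [← sq_abs t]; ring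

private lemma one_le_sqrt_one_add_abs (t : ℝ) : 1 ≤ Real.sqrt (1 + |t|) := by
  calc (1:ℝ) = Real.sqrt 1 := by simp
    _ ≤ Real.sqrt (1 + |t|) := Real.sqrt_le_sqrt (by linarith [abs_nonneg t])


/-- for `V` a real Hilbert space of dimension at least 2 and `G = {±id}`, the
map `[x] ↦ x ⊗ x` on the quotient of the unit sphere (whose output distance is
`‖x⊗x − y⊗y‖ = √(2 − 2⟨x,y⟩²)` and whose input distance is
`d([x],[y]) = min{‖x−y‖, ‖x+y‖}`) has optimal bilipschitz bounds `1` and `√2`;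
equivalently, for unit vectors `x, y` with `[x] ≠ [y]`, the distortion ratio equals
`√(1 + |⟨x,y⟩|) ∈ [1, √2)`. -/
theorem real_projective_embedding_bilipschitz
    {V : Type*} [NormedAddCommGroup V] [InnerProductSpace ℝ V] [CompleteSpace V]
    (hdim : 1 < Module.rank ℝ V) :
    (∀ x y : V, ‖x‖ = 1 → ‖y‖ = 1 → min ‖x - y‖ ‖x + y‖ ≠ 0 →
      Real.sqrt (2 - 2 * ⟪x, y⟫ ^ 2) / min ‖x - y‖ ‖x + y‖
        = Real.sqrt (1 + |⟪x, y⟫|) ∧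
      Real.sqrt (1 + |⟪x, y⟫|) ∈ Set.Ico (1 : ℝ) (Real.sqrt 2)) ∧
    IsGreatest {c : ℝ | ∀ x y : V, ‖x‖ = 1 → ‖y‖ = 1 →
      c * min ‖x - y‖ ‖x + y‖ ≤ Real.sqrt (2 - 2 * ⟪x, y⟫ ^ 2)} 1 ∧
    IsLeast {c : ℝ | ∀ x y : V, ‖x‖ = 1 → ‖y‖ = 1 →
      Real.sqrt (2 - 2 * ⟪x, y⟫ ^ 2) ≤ c * min ‖x - y‖ ‖x + y‖} (Real.sqrt 2) := by
  -- construct an orthonormal pair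
  obtain ⟨e₁, e₂, hne₁, hne₂, hinner⟩ :
      ∃ e₁ e₂ : V, ‖e₁‖ = 1 ∧ ‖e₂‖ = 1 ∧ ⟪e₁, e₂⟫ = 0 := by
    have hV : Nontrivial V := rank_pos_iff_nontrivial.mp (lt_trans zero_lt_one hdim)
    obtain ⟨v, hv⟩ := exists_ne (0 : V)
    have hvn : ‖v‖ ≠ 0 := norm_ne_zero_iff.mpr hv
    have hne₁ : ‖‖v‖⁻¹ • v‖ = 1 := by
      rw [norm_smul, norm_inv, norm_norm, inv_mul_cancel₀ hvn]
    have hKbot : (ℝ ∙ (‖v‖⁻¹ • v))ᗮ ≠ ⊥ := by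
      intro hbot
      rw [Submodule.orthogonal_eq_bot_iff] at hbot
      have hle : Module.rank ℝ V ≤ 1 := by
        rw [rank_le_one_iff]
        refine ⟨‖v‖⁻¹ • v, fun w => ?_⟩
        have hw : w ∈ (ℝ ∙ (‖v‖⁻¹ • v)) := hbot ▸ Submodule.mem_top
        exact Submodule.mem_span_singleton.mp hw
      exact absurd hdim (not_lt.mpr hle)
    obtain ⟨z, hz, hz0⟩ := Submodule.ne_bot_iff _ |>.mp hKbot
    have hzn : ‖z‖ ≠ 0 := norm_ne_zero_iff.mpr hz0
    refine ⟨‖v‖⁻¹ • v, ‖z‖⁻¹ • z, hne₁, ?_, ?_⟩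
    · rw [norm_smul, norm_inv, norm_norm, inv_mul_cancel₀ hzn]
    · rw [real_inner_smul_right,
        hz _ (Submodule.mem_span_singleton_self _), mul_zero]
  refine ⟨?_, ⟨?_, ?_⟩, ⟨?_, ?_⟩⟩
  · -- ratio formula
    intro x y hx hy hmin
    have habs : |⟪x, y⟫| ≤ 1 := by
      have := abs_real_inner_le_norm x y
      rwa [hx, hy, one_mul] at this
    have hmn := min_norm_eq x y hx hy
    have hlt : |⟪x, y⟫| < 1 := by
      rcases lt_or_eq_of_le habs with h | h
      · exact h
      · exfalso; apply hmin; rw [hmn, h]; norm_num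
    have hsp : (0:ℝ) < 2 - 2 * |⟪x, y⟫| := by linarith
    have hsn : Real.sqrt (2 - 2 * |⟪x, y⟫|) ≠ 0 := (Real.sqrt_pos.mpr hsp).ne'
    constructor
    · rw [hmn, sqrt_split, mul_comm]; exact mul_div_cancel_right₀ _ hsn
    · refine ⟨one_le_sqrt_one_add_abs _, ?_⟩
      exact Real.sqrt_lt_sqrt (by positivity) (by linarith)
  · -- 1 is a lower Lipschitz bound
    intro x y hx hy
    rw [min_norm_eq x y hx hy, sqrt_split, one_mul]
    exact le_mul_of_one_le_right (Real.sqrt_nonneg _) (one_le_sqrt_one_add_abs _)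
  · -- 1 is optimal
    intro c hc
    have h := hc e₁ e₂ hne₁ hne₂
    rw [min_norm_eq e₁ e₂ hne₁ hne₂, hinner] at h
    norm_num at h
    have h2 : (0:ℝ) < Real.sqrt 2 := by positivity
    exact h
  · -- √2 is an upper Lipschitz bound
    intro x y hx hy
    have habs : |⟪x, y⟫| ≤ 1 := by
      have := abs_real_inner_le_norm x y
      rwa [hx, hy, one_mul] at this
    rw [min_norm_eq x y hx hy, sqrt_split, mul_comm (Real.sqrt 2)]
    exact mul_le_mul_of_nonneg_left (Real.sqrt_le_sqrt (by linarith)) (Real.sqrt_nonneg _)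
  · -- √2 is optimal
    intro c hc
    have key : ∀ t : ℝ, 0 ≤ t → t < 1 → Real.sqrt (1 + t) ≤ c := by
      intro t ht0 ht1
      set s : ℝ := Real.sqrt (1 - t ^ 2) with hs
      have hs2 : s ^ 2 = 1 - t ^ 2 := Real.sq_sqrt (by nlinarith)
      have hs0 : 0 ≤ s := Real.sqrt_nonneg _
      have hips : ⟪t • e₁, s • e₂⟫ = (0:ℝ) := by
        rw [real_inner_smul_left, real_inner_smul_right, hinner]; ring
      have hny : ‖t • e₁ + s • e₂‖ = 1 := by
        have hsq : ‖t • e₁ + s • e₂‖ ^ 2 = 1 := by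
          rw [norm_add_sq_real, hips, norm_smul, norm_smul, hne₁, hne₂]
          simp only [mul_one, Real.norm_eq_abs, abs_of_nonneg ht0, abs_of_nonneg hs0]
          nlinarith
        rw [← Real.sqrt_sq (norm_nonneg _), hsq, Real.sqrt_one]
      have hiy : ⟪e₁, t • e₁ + s • e₂⟫ = t := by
        rw [inner_add_right, real_inner_smul_right, real_inner_smul_right, hinner,
          real_inner_self_eq_norm_sq, hne₁]
        ring
      have h := hc e₁ (t • e₁ + s • e₂) hne₁ hny
      rw [min_norm_eq e₁ _ hne₁ hny, hiy, sqrt_split, abs_of_nonneg ht0] at h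
      have hpos : 0 < Real.sqrt (2 - 2 * t) := Real.sqrt_pos.mpr (by linarith)
      exact le_of_mul_le_mul_right (by rw [mul_comm]; exact h) hpos
    have htend : Filter.Tendsto (fun n : ℕ => Real.sqrt (1 + (1 - 1 / (n + 1))))
        Filter.atTop (nhds (Real.sqrt 2)) := by
      have h1 : Filter.Tendsto (fun n : ℕ => 1 / ((n : ℝ) + 1)) Filter.atTop (nhds 0) :=
        tendsto_one_div_add_atTop_nhds_zero_nat
      have h2 : Filter.Tendsto (fun n : ℕ => 1 + (1 - 1 / ((n : ℝ) + 1))) Filter.atTop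
          (nhds 2) := by
        have h3 := (tendsto_const_nhds (x := (2:ℝ)) (f := Filter.atTop)).sub h1
        rw [sub_zero] at h3
        exact h3.congr (fun n => by ring)
      exact (Real.continuous_sqrt.tendsto 2).comp h2
    refine le_of_tendsto' htend fun n => ?_
    apply key
    · have h2 : 1 / ((n:ℝ) + 1) ≤ 1 := by
        rw [div_le_one (by positivity)]
        linarith [Nat.cast_nonneg (α := ℝ) n]
      linarith
    · have : 0 < 1 / ((n:ℝ) + 1) := by positivity
      linarith
end

section
/- Fix r ∈ ℕ, r ≥ 1, and let G = ⟨e^{2πi/r}⟩ act on ℂ by multiplication. Let f : S(ℂ)/G → S(ℂ) be defined by f([x]) = x^r. Then for unit complex numbers x ≠ y mod G, the ratio ‖f([x])−f([y])‖/d([x],[y]) equals sin(πrt)/sin(πt) for some t ∈ (0, 1/(2r)]; the function t ↦ sin(πrt)/sin(πt) is decreasing on (0, 1/(2r)]; and the optimal lower and upper Lipschitz bounds of f are 1/sin(π/(2r)) = csc(π/(2r)) and r, respectively. -/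
open Real

/-- Quotient distance on `S(ℂ)` modulo the cyclic group of `r`-th roots of unity:
`d([x],[y])² = 2 − 2·max_{g ∈ G} Re(g·x·ȳ)`. -/
noncomputable def dqRoots (r : ℕ) (x y : ℂ) : ℝ :=
  Real.sqrt (2 - 2 * ⨆ k : Fin r,
    (Complex.exp (2 * (Real.pi : ℂ) * Complex.I * ((k : ℕ) : ℂ) / (r : ℂ)) * x *
      (starRingEnd ℂ) y).re)

namespace PowerMapAux

lemma tele (r : ℕ) (a : ℝ) :
    ∑ k ∈ Finset.range r, Real.sin a * Real.cos ((2*(k:ℝ)+1-r)*a) = Real.sin (r*a) := by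
  have h : ∀ k ∈ Finset.range r, Real.sin a * Real.cos ((2*(k:ℝ)+1-r)*a)
      = Real.sin ((2*((k:ℝ)+1)-r)*a)/2 - Real.sin ((2*(k:ℝ)-r)*a)/2 := by
    intro k _
    rw [div_sub_div_same, Real.sin_sub_sin]
    ring_nf
  rw [Finset.sum_congr rfl h]
  have := Finset.sum_range_sub (fun k : ℕ => Real.sin ((2*(k:ℝ)-r)*a)/2) r
  push_cast at this ⊢
  rw [this]
  have : ((2:ℝ)*0 - r)*a = -(((2:ℝ)*r - r)*a) := by ring
  rw [this, Real.sin_neg]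
  ring_nf

lemma sin_nat_mul_le (r : ℕ) (a : ℝ) (ha : 0 ≤ a) (ha' : a ≤ π) :
    Real.sin (r*a) ≤ r * Real.sin a := by
  rw [← tele]
  calc ∑ k ∈ Finset.range r, Real.sin a * Real.cos ((2*(k:ℝ)+1-r)*a)
      ≤ ∑ k ∈ Finset.range r, Real.sin a * 1 := by
        refine Finset.sum_le_sum fun k _ => ?_
        exact mul_le_mul_of_nonneg_left (Real.cos_le_one _)
          (Real.sin_nonneg_of_nonneg_of_le_pi ha ha')
    _ = r * Real.sin a := by simp [mul_comm]

lemma ratio_eq_sum (r : ℕ) (a : ℝ) (ha : Real.sin a ≠ 0) :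
    Real.sin (r*a) / Real.sin a = ∑ k ∈ Finset.range r, Real.cos ((2*(k:ℝ)+1-r)*a) := by
  rw [div_eq_iff ha, ← tele, Finset.sum_mul]
  exact Finset.sum_congr rfl fun k _ => mul_comm _ _

lemma sinpos (r : ℕ) (hr : 1 ≤ r) (t : ℝ) (ht : t ∈ Set.Ioc (0:ℝ) (1/(2*(r:ℝ)))) :
    0 < Real.sin (π * t) := by
  have hr1 : (1:ℝ) ≤ r := by exact_mod_cast hr
  apply Real.sin_pos_of_pos_of_lt_pi (mul_pos Real.pi_pos ht.1)
  have h1 : π * t ≤ π * (1/(2*r)) := mul_le_mul_of_nonneg_left ht.2 Real.pi_pos.le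
  have h2 : π * (1/(2*(r:ℝ))) ≤ π/2 := by
    rw [mul_one_div]
    apply div_le_div_of_nonneg_left Real.pi_pos.le two_pos (by linarith)
  linarith [Real.pi_pos]

lemma ratio_antitone (r : ℕ) (hr : 1 ≤ r) :
    AntitoneOn (fun t : ℝ => Real.sin (Real.pi * r * t) / Real.sin (Real.pi * t))
      (Set.Ioc (0 : ℝ) (1 / (2 * r))) := by
  have hrpos : (0:ℝ) < r := by exact_mod_cast hr
  have hr1 : (1:ℝ) ≤ r := by exact_mod_cast hr
  have heq : ∀ t ∈ Set.Ioc (0:ℝ) (1/(2*r)),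
      Real.sin (π * r * t) / Real.sin (π * t)
        = ∑ k ∈ Finset.range r, Real.cos ((2*(k:ℝ)+1-r)*(π*t)) := by
    intro t ht
    have := ratio_eq_sum r (π*t) (sinpos r hr t ht).ne'
    rw [← this]
    ring_nf
  intro a ha b hb hab
  simp only
  rw [heq a ha, heq b hb]
  refine Finset.sum_le_sum fun k hk => ?_
  have hk1 : (k:ℝ) + 1 ≤ r := by exact_mod_cast Finset.mem_range.mp hk
  have hm : |2*(k:ℝ)+1-r| ≤ r := by
    rw [abs_le]
    constructor
    · linarith [Nat.cast_nonneg (α := ℝ) k]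
    · linarith
  have key : ∀ s : ℝ, 0 < s →
      Real.cos ((2*(k:ℝ)+1-r)*(π*s)) = Real.cos ((|2*(k:ℝ)+1-r|)*(π*s)) := by
    intro s _
    rcases abs_choice (2*(k:ℝ)+1-r) with h | h
    · rw [h]
    · rw [h, neg_mul, Real.cos_neg]
  rw [key a ha.1, key b hb.1]
  have hb2 : (|2*(k:ℝ)+1-r|) * (π * b) ≤ π := by
    have h3 : (|2*(k:ℝ)+1-r|) * (π * b) ≤ r * (π * (1/(2*r))) :=
      mul_le_mul hm (mul_le_mul_of_nonneg_left hb.2 Real.pi_pos.le)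
        (mul_nonneg Real.pi_pos.le hb.1.le) hrpos.le
    have heq2 : (r:ℝ) * (π * (1/(2*r))) = π/2 := by field_simp
    linarith [Real.pi_pos]
  apply Real.cos_le_cos_of_nonneg_of_le_pi
    (mul_nonneg (abs_nonneg _) (mul_nonneg Real.pi_pos.le ha.1.le)) hb2
  exact mul_le_mul_of_nonneg_left (mul_le_mul_of_nonneg_left hab Real.pi_pos.le) (abs_nonneg _)

lemma cos_shift_le (r : ℕ) (hr : 1 ≤ r) (δ : ℝ) (hδ : |δ| ≤ π/r) (j : ℕ) (hj : j < r) :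
    Real.cos (δ + 2*π*j/r) ≤ Real.cos δ := by
  have hr1 : (1:ℝ) ≤ r := by exact_mod_cast hr
  have hrpos : (0:ℝ) < r := by linarith
  have hstep : Real.cos (π/r) ≤ Real.cos δ := by
    rw [← Real.cos_abs δ]
    exact Real.cos_le_cos_of_nonneg_of_le_pi (abs_nonneg _)
      (div_le_self Real.pi_pos.le hr1) hδ
  rcases Nat.eq_zero_or_pos j with hj0 | hj1
  · subst hj0; simp
  · have hj1' : (1:ℝ) ≤ j := by exact_mod_cast hj1
    have hjr : (j:ℝ) + 1 ≤ r := by exact_mod_cast hj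
    have habs : |δ| ≤ π/r := hδ
    have hd1 : -(π/r) ≤ δ := by rw [abs_le] at habs; exact habs.1
    have hd2 : δ ≤ π/r := by rw [abs_le] at habs; exact habs.2
    have hu1 : π/r ≤ δ + 2*π*j/r := by
      have : 2*π*1/r ≤ 2*π*j/r := by
        apply div_le_div_of_nonneg_right ?_ hrpos.le
        · nlinarith [Real.pi_pos]
      have h2 : 2*π*1/r = 2*(π/r) := by ring
      linarith
    have hu2 : δ + 2*π*j/r ≤ 2*π - π/r := by
      have : 2*π*j/r ≤ 2*π*(r-1)/r := by
        apply div_le_div_of_nonneg_right ?_ hrpos.le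
        · nlinarith [Real.pi_pos]
      have h2 : 2*π*(r-1)/r = 2*π - 2*(π/r) := by field_simp
      linarith
    have htrans : Real.cos (δ + 2*π*j/r) ≤ Real.cos (π/r) := by
      by_cases hcase : δ + 2*π*j/r ≤ π
      · exact Real.cos_le_cos_of_nonneg_of_le_pi (by positivity) hcase hu1
      · rw [← Real.cos_two_pi_sub]
        apply Real.cos_le_cos_of_nonneg_of_le_pi (by positivity)
        · linarith
        · linarith
    linarith

lemma sup_eq (r : ℕ) (hr : 1 ≤ r) (θ δ : ℝ) (k₀ : ℤ)
    (hθ : θ = δ + 2*π*k₀/r) (hδ : |δ| ≤ π/r) :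
    (⨆ k : Fin r, Real.cos (2*π*((k:ℕ):ℝ)/r + θ)) = Real.cos δ := by
  have hr1 : (1:ℝ) ≤ r := by exact_mod_cast hr
  have hrpos : (0:ℝ) < r := by linarith
  have hrz : (0:ℤ) < (r:ℤ) := by exact_mod_cast hr
  haveI : Nonempty (Fin r) := ⟨⟨0, hr⟩⟩
  have term : ∀ n : ℤ, Real.cos (δ + 2*π*(n:ℝ)/r)
      = Real.cos (δ + 2*π*(((n % r : ℤ)):ℝ)/r) := by
    intro n
    have h := Int.mul_ediv_add_emod n (r:ℤ)
    have hn : (n:ℝ) = (r:ℝ)*((n/(r:ℤ) : ℤ):ℝ) + ((n % (r:ℤ) : ℤ):ℝ) := by exact_mod_cast h.symm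
    have e : δ + 2*π*(n:ℝ)/r = (δ + 2*π*(((n % r : ℤ)):ℝ)/r) + ((n/(r:ℤ) : ℤ):ℝ)*(2*π) := by
      rw [hn]; field_simp; ring
    rw [e, Real.cos_add_int_mul_two_pi]
  have term2 : ∀ k : ℕ, Real.cos (2*π*(k:ℝ)/r + θ)
      = Real.cos (δ + 2*π*((((k:ℤ)+k₀) % r : ℤ):ℝ)/r) := by
    intro k
    have e1 : 2*π*(k:ℝ)/r + θ = δ + 2*π*((((k:ℤ)+k₀ : ℤ)):ℝ)/r := by
      rw [hθ]; push_cast; ring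
    rw [e1, term]
  apply le_antisymm
  · apply ciSup_le
    intro k
    rw [term2 k]
    have hj0 : 0 ≤ ((k:ℤ)+k₀) % r := Int.emod_nonneg _ (by omega)
    have hjr : ((k:ℤ)+k₀) % r < r := Int.emod_lt_of_pos _ hrz
    obtain ⟨j, hj⟩ := Int.eq_ofNat_of_zero_le hj0
    rw [hj] at hjr
    rw [hj]
    push_cast
    exact cos_shift_le r hr δ hδ j (by exact_mod_cast hjr)
  · have hk : ((-k₀) % r).toNat < r := by
      have := Int.emod_lt_of_pos (-k₀) hrz
      have := Int.emod_nonneg (-k₀) (by omega : (r:ℤ) ≠ 0)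
      omega
    have key := term2 ((-k₀) % (r:ℤ)).toNat
    have hz : ((((((-k₀) % (r:ℤ)).toNat):ℤ) + k₀) % r : ℤ) = 0 := by
      have h1 : ((((-k₀) % (r:ℤ)).toNat):ℤ) = (-k₀) % r := by
        refine Int.toNat_of_nonneg (Int.emod_nonneg _ (by omega))
      rw [h1, Int.add_emod, Int.emod_emod_of_dvd _ dvd_rfl, ← Int.add_emod]
      simp
    rw [hz] at key
    simp only [Int.cast_zero, mul_zero, zero_div, add_zero] at key
    have := le_ciSup (f := fun k : Fin r => Real.cos (2*π*((k:ℕ):ℝ)/r + θ))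
      (Set.Finite.bddAbove (Set.finite_range _)) ⟨((-k₀) % (r:ℤ)).toNat, hk⟩
    simpa [key] using this

lemma abs_sin_eq (u : ℝ) (hu : |u| ≤ π) : |Real.sin u| = Real.sin |u| := by
  rcases abs_cases u with ⟨h1, h2⟩ | ⟨h1, h2⟩
  · rw [h1]
    exact abs_of_nonneg (Real.sin_nonneg_of_nonneg_of_le_pi h2 (by rw [← h1]; exact hu))
  · have hub : -π ≤ u := by
      have := hu; rw [h1] at this; linarith
    rw [h1, Real.sin_neg,
      abs_of_nonpos (Real.sin_nonpos_of_nonpos_of_neg_pi_le h2.le hub)]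

lemma dq_eq (r : ℕ) (hr : 1 ≤ r) (x y : ℂ) (θ δ : ℝ) (k₀ : ℤ)
    (hxy : x * (starRingEnd ℂ) y = Complex.exp (θ*Complex.I))
    (hθ : θ = δ + 2*π*k₀/r) (hδ : |δ| ≤ π/r) :
    dqRoots r x y = 2 * |Real.sin (δ/2)| := by
  have hterm : ∀ k : Fin r,
      (Complex.exp (2 * (Real.pi : ℂ) * Complex.I * ((k : ℕ) : ℂ) / (r : ℂ)) * x *
        (starRingEnd ℂ) y).re = Real.cos (2*π*((k:ℕ):ℝ)/r + θ) := by
    intro k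
    rw [mul_assoc, hxy, ← Complex.exp_add,
      show 2 * (Real.pi : ℂ) * Complex.I * ((k : ℕ) : ℂ) / (r : ℂ) + θ*Complex.I
        = ((2*π*((k:ℕ):ℝ)/r + θ : ℝ) : ℂ)*Complex.I by push_cast; ring]
    exact Complex.exp_ofReal_mul_I_re _
  have hsup : (⨆ k : Fin r,
      (Complex.exp (2 * (Real.pi : ℂ) * Complex.I * ((k : ℕ) : ℂ) / (r : ℂ)) * x *
        (starRingEnd ℂ) y).re) = Real.cos δ := by
    rw [iSup_congr hterm]
    exact sup_eq r hr θ δ k₀ hθ hδ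
  rw [dqRoots, hsup]
  have hs : Real.sin (δ/2)^2 = 1/2 - Real.cos δ/2 := by
    have := Real.sin_sq_eq_half_sub (δ/2)
    rwa [show 2*(δ/2) = δ by ring] at this
  have h2 : 2 - 2*Real.cos δ = (2*|Real.sin (δ/2)|)^2 := by
    rw [mul_pow, sq_abs]; nlinarith
  rw [h2, Real.sqrt_sq (by positivity)]

lemma norm_exp_sub_one (a : ℝ) : ‖Complex.exp (a*Complex.I) - 1‖ = 2*|Real.sin (a/2)| := by
  have h1 : Complex.exp (↑a*Complex.I) - 1
      = ((Real.cos a - 1 : ℝ) : ℂ) + ((Real.sin a : ℝ):ℂ)*Complex.I := by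
    rw [Complex.exp_mul_I, ← Complex.ofReal_cos, ← Complex.ofReal_sin]
    push_cast; ring
  rw [h1, Complex.norm_add_mul_I]
  have hs : Real.sin (a/2)^2 = 1/2 - Real.cos a/2 := by
    have := Real.sin_sq_eq_half_sub (a/2)
    rwa [show 2*(a/2) = a by ring] at this
  have hpyth := Real.sin_sq_add_cos_sq a
  have h2 : (Real.cos a - 1)^2 + (Real.sin a)^2 = (2*|Real.sin (a/2)|)^2 := by
    rw [mul_pow, sq_abs]
    nlinarith
  rw [h2, Real.sqrt_sq (by positivity)]

lemma norm_pow_sub_pow (r : ℕ) (α β : ℝ) :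
    ‖Complex.exp (α*Complex.I) ^ r - Complex.exp (β*Complex.I) ^ r‖
      = 2*|Real.sin (r*(α-β)/2)| := by
  have hfact : Complex.exp (α*Complex.I) ^ r - Complex.exp (β*Complex.I) ^ r
      = Complex.exp ((r*β : ℝ)*Complex.I) *
        (Complex.exp (((((r:ℝ)*(α-β)) : ℝ) : ℂ)*Complex.I) - 1) := by
    rw [← Complex.exp_nat_mul, ← Complex.exp_nat_mul, mul_sub, ← Complex.exp_add]
    push_cast
    ring_nf
  rw [hfact, norm_mul, Complex.norm_exp_ofReal_mul_I, one_mul,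
    norm_exp_sub_one]

lemma conj_exp_I (β : ℝ) :
    (starRingEnd ℂ) (Complex.exp (β*Complex.I)) = Complex.exp (((-β : ℝ):ℂ)*Complex.I) := by
  rw [← Complex.exp_conj, map_mul, Complex.conj_ofReal, Complex.conj_I]
  push_cast
  ring_nf

lemma keyD (r : ℕ) (hr : 1 ≤ r) (x y : ℂ) (hx : ‖x‖ = 1) (hy : ‖y‖ = 1) :
    ∃ t ∈ Set.Icc (0:ℝ) (1/(2*(r:ℝ))),
      dqRoots r x y = 2 * Real.sin (π*t) ∧ ‖x^r - y^r‖ = 2 * Real.sin (π*r*t) := by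
  have hr1 : (1:ℝ) ≤ r := by exact_mod_cast hr
  have hrpos : (0:ℝ) < r := by linarith
  obtain ⟨α, hα⟩ := (Complex.norm_eq_one_iff x).mp hx
  obtain ⟨β, hβ⟩ := (Complex.norm_eq_one_iff y).mp hy
  set θ := α - β with hθdef
  set k₀ := round (θ*r/(2*π)) with hk₀
  set δ := θ - 2*π*k₀/r with hδdef
  have hθ : θ = δ + 2*π*k₀/r := by rw [hδdef]; ring
  have hδ : |δ| ≤ π/r := by
    have h1 : δ = (2*π/r)*(θ*r/(2*π) - k₀) := by
      rw [hδdef]; field_simp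
    rw [h1, abs_mul, abs_of_pos (by positivity : (0:ℝ) < 2*π/r)]
    calc (2*π/r)*|θ*r/(2*π) - k₀| ≤ (2*π/r)*(1/2) :=
          mul_le_mul_of_nonneg_left (abs_sub_round _) (by positivity)
      _ = π/r := by ring
  have hxy : x * (starRingEnd ℂ) y = Complex.exp (θ*Complex.I) := by
    rw [← hα, ← hβ, conj_exp_I, ← Complex.exp_add]
    congr 1
    simp only [hθdef]
    push_cast
    ring
  have hδr : |δ| * (r:ℝ) ≤ π := (le_div_iff₀ hrpos).mp hδ
  refine ⟨|δ|/(2*π), ⟨by positivity, ?_⟩, ?_, ?_⟩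
  · rw [div_le_div_iff₀ (by positivity) (by positivity)]
    nlinarith [abs_nonneg δ, Real.pi_pos]
  · rw [dq_eq r hr x y θ δ k₀ hxy hθ hδ]
    have h2 : π * (|δ|/(2*π)) = |δ/2| := by
      rw [abs_div, abs_two]
      field_simp
    rw [h2, ← abs_sin_eq (δ/2) (by rw [abs_div, abs_two]; nlinarith [abs_nonneg δ, Real.pi_pos])]
  · rw [← hα, ← hβ, norm_pow_sub_pow]
    have h3 : (r:ℝ)*(α-β)/2 = (r:ℝ)*δ/2 + (k₀:ℝ)*π := by
      have : α - β = θ := rfl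
      rw [this, hθ]
      field_simp
    have h4 : |Real.sin ((r:ℝ)*(α-β)/2)| = |Real.sin ((r:ℝ)*δ/2)| := by
      rw [h3, Real.sin_add, Real.sin_int_mul_pi, mul_zero, add_zero, abs_mul,
        Real.abs_cos_int_mul_pi, mul_one]
    have h5 : π*(r:ℝ)*(|δ|/(2*π)) = |(r:ℝ)*δ/2| := by
      rw [abs_div, abs_mul, abs_two, abs_of_nonneg hrpos.le]
      field_simp
    rw [h4, h5, ← abs_sin_eq ((r:ℝ)*δ/2) ?_]
    rw [abs_div, abs_mul, abs_two, abs_of_nonneg hrpos.le]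
    calc (r:ℝ) * |δ| / 2 = (|δ| * (r:ℝ)) / 2 := by ring
      _ ≤ π/2 := by linarith
      _ ≤ π := by linarith [Real.pi_pos]

end PowerMapAux

open PowerMapAux in
theorem power_map_roots_of_unity_bilipschitz (r : ℕ) (hr : 1 ≤ r) :
    (∀ x y : ℂ, ‖x‖ = 1 → ‖y‖ = 1 → dqRoots r x y ≠ 0 →
      ∃ t : ℝ, t ∈ Set.Ioc (0 : ℝ) (1 / (2 * r)) ∧
        ‖x ^ r - y ^ r‖ / dqRoots r x y
          = Real.sin (Real.pi * r * t) / Real.sin (Real.pi * t)) ∧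
    AntitoneOn (fun t : ℝ => Real.sin (Real.pi * r * t) / Real.sin (Real.pi * t))
      (Set.Ioc (0 : ℝ) (1 / (2 * r))) ∧
    IsGreatest {c : ℝ | ∀ x y : ℂ, ‖x‖ = 1 → ‖y‖ = 1 →
      c * dqRoots r x y ≤ ‖x ^ r - y ^ r‖} (Real.sin (Real.pi / (2 * r)))⁻¹ ∧
    IsLeast {c : ℝ | ∀ x y : ℂ, ‖x‖ = 1 → ‖y‖ = 1 →
      ‖x ^ r - y ^ r‖ ≤ c * dqRoots r x y} (r : ℝ) := by
  have hr1 : (1:ℝ) ≤ r := by exact_mod_cast hr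
  have hrpos : (0:ℝ) < r := by linarith
  have hq2 : (0:ℝ) < π/(2*r) := by positivity
  have hq2' : π/(2*r) < π := by
    rw [div_lt_iff₀ (by positivity)]
    nlinarith [Real.pi_pos]
  have hsinq : 0 < Real.sin (π/(2*r)) := Real.sin_pos_of_pos_of_lt_pi hq2 hq2'
  have hendmem : (1/(2*(r:ℝ))) ∈ Set.Ioc (0:ℝ) (1/(2*r)) := ⟨by positivity, le_refl _⟩
  have hend : Real.sin (π * r * (1/(2*(r:ℝ)))) / Real.sin (π*(1/(2*(r:ℝ))))
      = (Real.sin (π/(2*(r:ℝ))))⁻¹ := by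
    rw [show π * (r:ℝ) * (1/(2*(r:ℝ))) = π/2 by field_simp, Real.sin_pi_div_two,
      mul_one_div, one_div]
  have hanti := ratio_antitone r hr
  refine ⟨?_, hanti, ⟨?_, ?_⟩, ⟨?_, ?_⟩⟩
  · -- part 1: ratio formula
    intro x y hx hy hne
    obtain ⟨t, ht, hdq, hnorm⟩ := keyD r hr x y hx hy
    have htpos : 0 < t := by
      rcases lt_or_eq_of_le ht.1 with h | h
      · exact h
      · exfalso; apply hne; rw [hdq, ← h]; simp
    refine ⟨t, ⟨htpos, ht.2⟩, ?_⟩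
    rw [hnorm, hdq, mul_div_mul_left _ _ (by norm_num : (2:ℝ) ≠ 0)]
  · -- greatest : membership
    intro x y hx hy
    obtain ⟨t, ht, hdq, hnorm⟩ := keyD r hr x y hx hy
    rcases eq_or_lt_of_le ht.1 with h | htpos
    · rw [hdq, ← h]
      simp
    · have htmem : t ∈ Set.Ioc (0:ℝ) (1/(2*(r:ℝ))) := ⟨htpos, ht.2⟩
      have hs := sinpos r hr t htmem
      have hmono : Real.sin (π * (r:ℝ) * (1/(2*(r:ℝ)))) / Real.sin (π*(1/(2*(r:ℝ))))
          ≤ Real.sin (π * (r:ℝ) * t) / Real.sin (π * t) := hanti htmem hendmem ht.2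
      rw [hend] at hmono
      rw [hdq, hnorm]
      have := (le_div_iff₀ hs).mp hmono
      linarith
  · -- greatest : upper bound
    intro c hc
    have hxy : Complex.exp (((π/(r:ℝ)):ℝ)*Complex.I) * (starRingEnd ℂ) 1
        = Complex.exp (((π/(r:ℝ)):ℝ)*Complex.I) := by
      simp
    have hdq := dq_eq r hr (Complex.exp (((π/(r:ℝ)):ℝ)*Complex.I)) 1 (π/r) (-(π/r)) 1
      hxy (by push_cast; field_simp; ring) (by rw [abs_neg, abs_of_pos (by positivity)])
    have hdq2 : dqRoots r (Complex.exp (((π/(r:ℝ)):ℝ)*Complex.I)) 1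
        = 2 * Real.sin (π/(2*(r:ℝ))) := by
      rw [hdq, show -(π/(r:ℝ))/2 = -(π/(2*(r:ℝ))) by ring, Real.sin_neg, abs_neg,
        abs_of_pos hsinq]
    have hnx : ‖Complex.exp (((π/(r:ℝ)):ℝ)*Complex.I)‖ = 1 := by
      rw [Complex.norm_exp_ofReal_mul_I]
    have hkey := hc (Complex.exp (((π/(r:ℝ)):ℝ)*Complex.I)) 1 hnx (by simp)
    rw [hdq2] at hkey
    have hnorm : ‖Complex.exp (((π/(r:ℝ)):ℝ)*Complex.I) ^ r - (1:ℂ) ^ r‖ = 2 := by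
      rw [show (1:ℂ) = Complex.exp (((0:ℝ):ℂ)*Complex.I) by simp, norm_pow_sub_pow,
        show (r:ℝ)*(π/(r:ℝ) - 0)/2 = π/2 by field_simp; ring, Real.sin_pi_div_two]
      norm_num
    rw [hnorm] at hkey
    rw [← one_div, le_div_iff₀ hsinq]
    linarith
  · -- least : membership
    intro x y hx hy
    obtain ⟨t, ht, hdq, hnorm⟩ := keyD r hr x y hx hy
    rw [hdq, hnorm]
    have h1 : 0 ≤ π * t := mul_nonneg Real.pi_pos.le ht.1
    have h2 : π * t ≤ π := by
      have : t ≤ 1 := by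
        calc t ≤ 1/(2*(r:ℝ)) := ht.2
          _ ≤ 1 := by rw [div_le_one (by positivity)]; linarith
      nlinarith [Real.pi_pos]
    have := sin_nat_mul_le r (π*t) h1 h2
    calc 2 * Real.sin (π*(r:ℝ)*t) = 2 * Real.sin ((r:ℝ)*(π*t)) := by ring_nf
      _ ≤ 2 * ((r:ℝ) * Real.sin (π*t)) := by linarith
      _ = (r:ℝ) * (2 * Real.sin (π*t)) := by ring
  · -- least : lower bound
    intro c hc
    have hkey : ∀ s ∈ Set.Ioc (0:ℝ) (1/(2*(r:ℝ))),
        Real.sin (π*(r:ℝ)*s) / Real.sin (π*s) ≤ c := by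
      intro s hs
      have hspos := hs.1
      have hsle := hs.2
      have hδbound : |2*π*s| ≤ π/r := by
        rw [abs_of_pos (by positivity)]
        rw [le_div_iff₀ hrpos]
        have : s * (r:ℝ) ≤ 1/2 := by
          have h6 := mul_le_mul_of_nonneg_right hsle hrpos.le
          rwa [show (1/(2*(r:ℝ)))*(r:ℝ) = 1/2 by field_simp] at h6
        nlinarith [Real.pi_pos]
      have hxy : Complex.exp (((2*π*s):ℝ)*Complex.I) * (starRingEnd ℂ) 1
          = Complex.exp (((2*π*s):ℝ)*Complex.I) := by simp
      have hdq := dq_eq r hr (Complex.exp (((2*π*s):ℝ)*Complex.I)) 1 (2*π*s) (2*π*s) 0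
        hxy (by simp) hδbound
      have hsin1 := sinpos r hr s hs
      have hdq2 : dqRoots r (Complex.exp (((2*π*s):ℝ)*Complex.I)) 1
          = 2 * Real.sin (π*s) := by
        rw [hdq, show 2*π*s/2 = π*s by ring, abs_of_pos hsin1]
      have hsin2 : 0 < Real.sin (π*(r:ℝ)*s) := by
        apply Real.sin_pos_of_pos_of_lt_pi (by positivity)
        have h5 : π * (r:ℝ) * s ≤ π/2 := by
          have : (r:ℝ) * s ≤ 1/2 := by
            have h6 := mul_le_mul_of_nonneg_left hsle hrpos.le
            rwa [show (r:ℝ)*(1/(2*(r:ℝ))) = 1/2 by field_simp] at h6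
          nlinarith [Real.pi_pos]
        linarith [Real.pi_pos]
      have hnorm : ‖Complex.exp (((2*π*s):ℝ)*Complex.I) ^ r - (1:ℂ) ^ r‖
          = 2 * Real.sin (π*(r:ℝ)*s) := by
        rw [show (1:ℂ) = Complex.exp (((0:ℝ):ℂ)*Complex.I) by simp, norm_pow_sub_pow,
          show (r:ℝ)*(2*π*s - 0)/2 = π*(r:ℝ)*s by ring, abs_of_pos hsin2]
      have hnx : ‖Complex.exp (((2*π*s):ℝ)*Complex.I)‖ = 1 := by
        rw [Complex.norm_exp_ofReal_mul_I]
      have := hc (Complex.exp (((2*π*s):ℝ)*Complex.I)) 1 hnx (by simp)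
      rw [hnorm, hdq2] at this
      rw [div_le_iff₀ hsin1]
      linarith
    -- now take the limit s → 0⁺
    have hgc : Continuous (fun s : ℝ =>
        ∑ k ∈ Finset.range r, Real.cos ((2*(k:ℝ)+1-r)*(π*s))) := by
      apply continuous_finset_sum
      intro k _
      exact Real.continuous_cos.comp (by continuity)
    have hg0 : (∑ k ∈ Finset.range r, Real.cos ((2*(k:ℝ)+1-r)*(π*(0:ℝ)))) = r := by
      simp
    have htend : Filter.Tendsto (fun s : ℝ =>
        ∑ k ∈ Finset.range r, Real.cos ((2*(k:ℝ)+1-r)*(π*s)))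
        (nhdsWithin 0 (Set.Ioi 0)) (nhds (r:ℝ)) := by
      have h7 := (hgc.tendsto 0).mono_left (nhdsWithin_le_nhds (s := Set.Ioi (0:ℝ)))
      rwa [hg0] at h7
    apply le_of_tendsto htend
    have hmem : Set.Ioc (0:ℝ) (1/(2*(r:ℝ))) ∈ nhdsWithin (0:ℝ) (Set.Ioi 0) :=
      Ioc_mem_nhdsGT (by positivity)
    filter_upwards [hmem] with s hs
    have heq := ratio_eq_sum r (π*s) (sinpos r hr s hs).ne'
    rw [show (r:ℝ)*(π*s) = π*(r:ℝ)*s by ring] at heq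
    rw [← heq]
    exact hkey s hs
end

section
/- Let V, W be real Hilbert spaces, G ≤ O(V), and suppose x ∈ V is fixed by some non-identity element of G. If f : V → W is G-invariant and Fréchet differentiable at x, then there exists a unit vector v ∈ V orthogonal to x with Df(x)v = 0. -/
open scoped RealInnerProductSpace

/-- if `x` is fixed by a non-identity element of `G ≤ O(V)` and `f : V → W`
is `G`-invariant and Fréchet differentiable at `x`, then there is a unit vector `v`
orthogonal to `x` with `Df(x)v = 0`. -/
theorem invariant_derivative_has_kernel_vector
    {V W : Type*} [NormedAddCommGroup V] [InnerProductSpace ℝ V] [CompleteSpace V]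
    [NormedAddCommGroup W] [InnerProductSpace ℝ W] [CompleteSpace W]
    (G : Subgroup (V ≃ₗᵢ[ℝ] V)) (f : V → W)
    (hinv : ∀ g ∈ G, ∀ v : V, f (g v) = f v)
    (x : V) (hfix : ∃ g ∈ G, g ≠ 1 ∧ g x = x)
    (A : V →L[ℝ] W) (hA : HasFDerivAt f A x) :
    ∃ v : V, ‖v‖ = 1 ∧ ⟪x, v⟫ = 0 ∧ A v = 0 := by
  obtain ⟨g, hgG, hg1, hgx⟩ := hfix
  -- pick w with g w ≠ w
  have hw : ∃ w : V, g w ≠ w := by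
    by_contra h
    push_neg at h
    exact hg1 (by ext v; simp [h v])
  obtain ⟨w, hw⟩ := hw
  -- derivative of f ∘ g at x
  have hg' : HasFDerivAt (⇑g) (g.toContinuousLinearEquiv.toContinuousLinearMap) x :=
    g.toContinuousLinearEquiv.toContinuousLinearMap.hasFDerivAt
  have hcomp : HasFDerivAt (f ∘ ⇑g)
      (A.comp g.toContinuousLinearEquiv.toContinuousLinearMap) x := by
    have := hA
    rw [← hgx] at this
    exact this.comp x hg'
  have hfg : (f ∘ ⇑g) = f := funext fun v => hinv g hgG v
  rw [hfg] at hcomp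
  have hAeq : A.comp g.toContinuousLinearEquiv.toContinuousLinearMap = A :=
    hcomp.unique hA
  have hAg : ∀ v : V, A (g v) = A v := fun v => by
    have := DFunLike.congr_fun hAeq v
    simpa using this
  set u : V := g w - w with hu
  have hune : u ≠ 0 := sub_ne_zero.mpr hw
  have hAu : A u = 0 := by simp [hu, map_sub, hAg w]
  have hxu : ⟪x, u⟫ = 0 := by
    have : ⟪x, g w⟫ = ⟪x, w⟫ := by
      calc ⟪x, g w⟫ = ⟪g x, g w⟫ := by rw [hgx]
        _ = ⟪x, w⟫ := g.inner_map_map x w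
    simp [hu, inner_sub_right, this]
  refine ⟨‖u‖⁻¹ • u, ?_, ?_, ?_⟩
  · simp [norm_smul, norm_ne_zero_iff.mpr hune, inv_mul_cancel₀ (norm_ne_zero_iff.mpr hune)]
  · simp [inner_smul_right, hxu]
  · simp [map_smul, hAu]
end

section
/- Let V, W be real Hilbert spaces with G ≤ O(V) finite, and suppose x ∈ V is fixed by some non-identity element of G. If f : V → W is G-invariant and Fréchet differentiable at x, then the induced map f↓ : V/G → W on the quotient metric space is not lower Lipschitz: inf over pairs of distinct orbits of ‖f↓([y])−f↓([z])‖/d([y],[z]) equals 0. -/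
/-!
If `g ≠ 1` fixes `x`, differentiating `f ∘ g = f` at `x` gives `A ∘ g = A`, so `A` vanishes on
`u = g v - v ≠ 0` and `f (x + t • u) - f x = o(t)`. On the other hand the orbit of `x` is finite,
so for small `t` the orbit point closest to `x + t • u` is `x` itself, and the quotient distance
between `[x]` and `[x + t • u]` is exactly `‖t • u‖`. Hence
`α ‖t • u‖ ≤ o(t)` fails for every `α > 0`.
-/

open Filter Topology Metric Asymptotics

theorem Set.Finite.eventually_infDist_eq_dist {α : Type*} [MetricSpace α] {S : Set α}
    (hS : S.Finite) {x : α} (hx : x ∈ S) : ∀ᶠ y in 𝓝 x, infDist y S = dist y x := by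
  obtain ⟨ε, hε, hball⟩ := Metric.mem_nhds_iff.mp
    ((hS.sdiff (t := {x})).isClosed.isOpen_compl.mem_nhds fun h => h.2 rfl)
  filter_upwards [ball_mem_nhds x (half_pos hε)] with y hy
  refine le_antisymm (infDist_le_dist_of_mem hx) ((le_infDist ⟨x, hx⟩).mpr fun s hs => ?_)
  rcases eq_or_ne s x with rfl | hsx
  · exact le_rfl
  · have : ε ≤ dist s x := not_lt.mp fun h => hball h ⟨hs, hsx⟩
    rw [mem_ball] at hy
    linarith [dist_triangle_left s x y, dist_comm y s]

theorem HasFDerivAt.comp_eq_of_invariant {𝕜 E F : Type*} [NontriviallyNormedField 𝕜]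
    [NormedAddCommGroup E] [NormedSpace 𝕜 E] [NormedAddCommGroup F] [NormedSpace 𝕜 F]
    {f : E → F} {A : E →L[𝕜] F} {x : E} {L : E →L[𝕜] E} (hA : HasFDerivAt f A x)
    (hLx : L x = x) (hfL : ∀ v, f (L v) = f v) : A.comp L = A := by
  have hcomp : HasFDerivAt (f ∘ L) (A.comp L) x := (hLx ▸ hA).comp x L.hasFDerivAt
  rw [show f ∘ L = f from funext hfL] at hcomp
  exact hcomp.unique hA

theorem HasFDerivAt.isLittleO_line_of_apply_eq_zero {𝕜 E F : Type*} [NontriviallyNormedField 𝕜]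
    [NormedAddCommGroup E] [NormedSpace 𝕜 E] [NormedAddCommGroup F] [NormedSpace 𝕜 F]
    {f : E → F} {A : E →L[𝕜] F} {x u : E} (hA : HasFDerivAt f A x) (hAu : A u = 0) :
    (fun t : 𝕜 => f (x + t • u) - f x) =o[𝓝 0] fun t => t := by
  have hline : HasDerivAt (fun t : 𝕜 => x + t • u) u 0 := by
    simpa using ((hasDerivAt_id (0 : 𝕜)).smul_const u).const_add x
  have := (hA.comp_hasDerivAt_of_eq 0 hline (by simp)).isLittleO
  simpa [hAu] using this

theorem invariant_differentiable_not_lower_lipschitz_general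
    {V W : Type*} [NormedAddCommGroup V] [InnerProductSpace ℝ V]
    [NormedAddCommGroup W] [InnerProductSpace ℝ W]
    (G : Subgroup (V ≃ₗᵢ[ℝ] V)) [Finite G]
    (f : V → W) (hinv : ∀ g ∈ G, ∀ v : V, f (g v) = f v)
    (x : V) (hfix : ∃ g ∈ G, g ≠ 1 ∧ g x = x)
    (A : V →L[ℝ] W) (hA : HasFDerivAt f A x) :
    ¬ ∃ α : ℝ, 0 < α ∧ ∀ y z : V,
      α * Metric.infDist z {w : V | ∃ g ∈ G, g y = w} ≤ ‖f y - f z‖ := by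
  rintro ⟨α, hα, hlower⟩
  obtain ⟨g, hgG, hg1, hgx⟩ := hfix
  obtain ⟨v, hv⟩ : ∃ v, g v ≠ v := not_forall.mp fun h => hg1 (LinearIsometryEquiv.ext h)
  set u := g v - v
  have hu : 0 < ‖u‖ := norm_pos_iff.mpr (sub_ne_zero.mpr hv)
  have hAu : A u = 0 := by
    have := hA.comp_eq_of_invariant (L := g.toContinuousLinearEquiv) hgx (hinv g hgG)
    simpa [u, sub_eq_zero] using DFunLike.congr_fun this v
  have horbit : {w : V | ∃ h ∈ G, h x = w}.Finite :=
    (G : Set (V ≃ₗᵢ[ℝ] V)).toFinite.image fun h : V ≃ₗᵢ[ℝ] V => h x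
  have hline : Tendsto (fun t : ℝ => x + t • u) (𝓝 0) (𝓝 x) :=
    (continuous_const.add (continuous_id.smul continuous_const)).tendsto' _ _ (by simp)
  have hdist := hline.eventually (horbit.eventually_infDist_eq_dist ⟨1, G.one_mem, rfl⟩)
  have hflat := (hA.isLittleO_line_of_apply_eq_zero hAu).def (by positivity : 0 < α * ‖u‖ / 2)
  obtain ⟨t, ⟨htd, htf⟩, ht⟩ := ((hdist.and hflat).filter_mono nhdsWithin_le_nhds).and
    self_mem_nhdsWithin |>.exists (f := 𝓝[≠] (0 : ℝ))
  have hxt := hlower x (x + t • u)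
  rw [htd, dist_eq_norm, add_sub_cancel_left, norm_smul, norm_sub_rev (f x)] at hxt
  have ht' : 0 < ‖t‖ := norm_pos_iff.mpr ht
  nlinarith [mul_pos ht' hu]

/-- for finite `G ≤ O(V)`, if `x` is fixed by a non-identity element of `G`
and `f : V → W` is `G`-invariant and Fréchet differentiable at `x`, then the induced map
on the quotient `V/G` (with quotient metric `d([y],[z]) = inf_{g∈G} ‖g·y − z‖`) is not
lower Lipschitz. -/
theorem invariant_differentiable_not_lower_lipschitz
    {V W : Type*} [NormedAddCommGroup V] [InnerProductSpace ℝ V] [CompleteSpace V]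
    [NormedAddCommGroup W] [InnerProductSpace ℝ W] [CompleteSpace W]
    (G : Subgroup (V ≃ₗᵢ[ℝ] V)) [Finite G]
    (f : V → W) (hinv : ∀ g ∈ G, ∀ v : V, f (g v) = f v)
    (x : V) (hfix : ∃ g ∈ G, g ≠ 1 ∧ g x = x)
    (A : V →L[ℝ] W) (hA : HasFDerivAt f A x) :
    ¬ ∃ α : ℝ, 0 < α ∧ ∀ y z : V,
      α * Metric.infDist z {w : V | ∃ g ∈ G, g y = w} ≤ ‖f y - f z‖ :=
  invariant_differentiable_not_lower_lipschitz_general G f hinv x hfix A hA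
end

section
/- Let G ≤ O(d) be nontrivial and f : ℝ^d → ℝ^n a G-invariant polynomial map. If the induced map f↓ on ℝ^d/∕G is upper Lipschitz (with respect to the quotient metric), then f is affine linear; and if f is affine linear, then f↓ is not injective. -/
open MvPolynomial

lemma eval_aeval_poly {d : ℕ} (g : Fin d → Polynomial ℝ) (p : MvPolynomial (Fin d) ℝ) (t : ℝ) :
    Polynomial.eval t (MvPolynomial.aeval g p) =
      MvPolynomial.eval (fun j => Polynomial.eval t (g j)) p := by
  induction p using MvPolynomial.induction_on with
  | C a => simp
  | add p q hp hq => simp [hp, hq]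
  | mul_X p j hp => simp [hp]

lemma eval_aeval_mv {d : ℕ} (g : Fin d → MvPolynomial (Fin d) ℝ) (p : MvPolynomial (Fin d) ℝ)
    (x : Fin d → ℝ) :
    MvPolynomial.eval x (MvPolynomial.aeval g p) =
      MvPolynomial.eval (fun j => MvPolynomial.eval x (g j)) p := by
  induction p using MvPolynomial.induction_on with
  | C a => simp
  | add p q hp hq => simp only [map_add, hp, hq]
  | mul_X p j hp => simp only [map_mul, MvPolynomial.aeval_X, MvPolynomial.eval_mul,
      MvPolynomial.eval_X, hp]

lemma bounded_mvpoly_const {d : ℕ} (p : MvPolynomial (Fin d) ℝ) (M : ℝ)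
    (hb : ∀ x : Fin d → ℝ, |MvPolynomial.eval x p| ≤ M) :
    ∀ x y : Fin d → ℝ, MvPolynomial.eval x p = MvPolynomial.eval y p := by
  intro x y
  set q : Polynomial ℝ :=
    MvPolynomial.aeval (fun j => Polynomial.C (x j) + Polynomial.C (y j - x j) * Polynomial.X) p
    with hqdef
  have hq : ∀ t : ℝ, Polynomial.eval t q = MvPolynomial.eval (fun j => x j + (y j - x j) * t) p := by
    intro t
    rw [hqdef, eval_aeval_poly]
    simp
  have hdeg : q.degree ≤ 0 := by
    rw [← Polynomial.abs_isBoundedUnder_iff]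
    exact Filter.isBoundedUnder_of ⟨M, fun t => by rw [hq]; exact hb _⟩
  have hC := Polynomial.eq_C_of_degree_le_zero hdeg
  have h0 := hq 0
  have h1 := hq 1
  rw [hC] at h0 h1
  simp only [Polynomial.eval_C] at h0 h1
  rw [show (fun j => x j + (y j - x j) * 0) = x from by funext j; ring] at h0
  rw [show (fun j => x j + (y j - x j) * 1) = y from by funext j; ring] at h1
  exact h0.symm.trans h1

lemma euclidean_coord_le {n : ℕ} (x : EuclideanSpace ℝ (Fin n)) (i : Fin n) : |x i| ≤ ‖x‖ := by
  rw [EuclideanSpace.norm_eq]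
  have h1 : |x i| = Real.sqrt (‖x i‖ ^ 2) := by
    rw [Real.sqrt_sq_eq_abs, Real.norm_eq_abs, abs_abs]
  rw [h1]
  exact Real.sqrt_le_sqrt (Finset.single_le_sum (fun j _ => sq_nonneg ‖x j‖) (Finset.mem_univ i))

/-- for nontrivial `G ≤ O(d)` and a `G`-invariant polynomial map
`f : ℝ^d → ℝ^n`: if the induced map on `ℝ^d/∕G` is upper Lipschitz then `f` is affine
linear, and if `f` is affine linear then the induced map is not injective. -/
theorem invariant_polynomial_not_bilipschitz
    {d n : ℕ}
    (G : Subgroup (EuclideanSpace ℝ (Fin d) ≃ₗᵢ[ℝ] EuclideanSpace ℝ (Fin d)))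
    (hG : G ≠ ⊥)
    (f : EuclideanSpace ℝ (Fin d) → EuclideanSpace ℝ (Fin n))
    (hpoly : ∀ i : Fin n, ∃ p : MvPolynomial (Fin d) ℝ,
      ∀ x : EuclideanSpace ℝ (Fin d), f x i = MvPolynomial.eval (fun j => x j) p)
    (hinv : ∀ g ∈ G, ∀ x : EuclideanSpace ℝ (Fin d), f (g x) = f x) :
    ((∃ β : ℝ, ∀ x y : EuclideanSpace ℝ (Fin d), ‖f x - f y‖ ≤ β * qd G x y) →
      ∃ (A : EuclideanSpace ℝ (Fin d) →ₗ[ℝ] EuclideanSpace ℝ (Fin n))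
        (b : EuclideanSpace ℝ (Fin n)), ∀ x, f x = A x + b) ∧
    ((∃ (A : EuclideanSpace ℝ (Fin d) →ₗ[ℝ] EuclideanSpace ℝ (Fin n))
        (b : EuclideanSpace ℝ (Fin n)), ∀ x, f x = A x + b) →
      ∃ x y : EuclideanSpace ℝ (Fin d), f x = f y ∧ qd G x y ≠ 0) := by
  have hone : ∀ x : EuclideanSpace ℝ (Fin d), x ∈ closure (orbG G x) :=
    fun x => subset_closure ⟨1, G.one_mem, rfl⟩
  constructor
  · rintro ⟨β, hβ⟩
    have hmem : ∀ x y : EuclideanSpace ℝ (Fin d), dist x y ∈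
        {r : ℝ | ∃ p ∈ closure (orbG G x), ∃ q ∈ closure (orbG G y), r = dist p q} :=
      fun x y => ⟨x, hone x, y, hone y, rfl⟩
    have hqd_le : ∀ x y : EuclideanSpace ℝ (Fin d), qd G x y ≤ dist x y := by
      intro x y
      refine csInf_le ⟨0, ?_⟩ (hmem x y)
      rintro r ⟨p, _, q, _, rfl⟩; exact dist_nonneg
    have hqd_nonneg : ∀ x y : EuclideanSpace ℝ (Fin d), 0 ≤ qd G x y := by
      intro x y
      refine le_csInf ⟨_, hmem x y⟩ ?_
      rintro r ⟨p, _, q, _, rfl⟩; exact dist_nonneg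
    have hlip : ∀ x y : EuclideanSpace ℝ (Fin d), ‖f x - f y‖ ≤ |β| * ‖x - y‖ := by
      intro x y
      calc ‖f x - f y‖ ≤ β * qd G x y := hβ x y
        _ ≤ |β| * qd G x y := mul_le_mul_of_nonneg_right (le_abs_self β) (hqd_nonneg x y)
        _ ≤ |β| * dist x y := mul_le_mul_of_nonneg_left (hqd_le x y) (abs_nonneg β)
        _ = |β| * ‖x - y‖ := by rw [dist_eq_norm]
    have key : ∀ v x : EuclideanSpace ℝ (Fin d), f (x + v) - f x = f v - f 0 := by
      intro v x
      have hsub : ∀ (a b : EuclideanSpace ℝ (Fin n)) (i : Fin n), (a - b) i = a i - b i :=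
        fun _ _ _ => rfl
      have hcomp : ∀ i : Fin n, f (x + v) i - f x i = f v i - f 0 i := by
        intro i
        obtain ⟨p, hp⟩ := hpoly i
        set r : MvPolynomial (Fin d) ℝ :=
          (MvPolynomial.aeval (fun j => MvPolynomial.X j + MvPolynomial.C (v j)) p) - p with hrdef
        have hr : ∀ z : EuclideanSpace ℝ (Fin d),
            MvPolynomial.eval (fun j => z j) r = f (z + v) i - f z i := by
          intro z
          rw [hrdef, map_sub, eval_aeval_mv, ← hp z]
          have h1 : (fun j => MvPolynomial.eval (fun j' => z j')
              (MvPolynomial.X j + MvPolynomial.C (v j))) = fun j => (z + v) j := by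
            funext j; simp
          rw [h1, ← hp (z + v)]
        have hbound : ∀ z : EuclideanSpace ℝ (Fin d),
            |MvPolynomial.eval (fun j => z j) r| ≤ |β| * ‖v‖ := by
          intro z
          rw [hr z, ← hsub]
          calc |(f (z + v) - f z) i| ≤ ‖f (z + v) - f z‖ := euclidean_coord_le _ i
            _ ≤ |β| * ‖z + v - z‖ := hlip _ _
            _ = |β| * ‖v‖ := by rw [add_sub_cancel_left]
        have hconst := bounded_mvpoly_const r (|β| * ‖v‖) (fun z => hbound (WithLp.toLp 2 z))
          (fun j => x j) (fun j => (0 : EuclideanSpace ℝ (Fin d)) j)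
        rw [hr x, hr 0, zero_add] at hconst
        exact hconst
      refine PiLp.ext fun i => ?_
      rw [hsub, hsub, hcomp i]
    have hA : ∀ v w : EuclideanSpace ℝ (Fin d),
        f (v + w) - f 0 = (f v - f 0) + (f w - f 0) := by
      intro v w
      have h1 : f (v + w) - f w = f v - f 0 := by rw [add_comm]; exact key v w
      calc f (v + w) - f 0 = (f (v + w) - f w) + (f w - f 0) := by abel
        _ = (f v - f 0) + (f w - f 0) := by rw [h1]
    have hfc : Continuous f := by
      refine LipschitzWith.continuous (K := Real.toNNReal |β|) ?_
      apply LipschitzWith.of_dist_le_mul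
      intro x y
      rw [dist_eq_norm, dist_eq_norm, Real.coe_toNNReal _ (abs_nonneg β)]
      exact hlip x y
    have hcont : Continuous fun v : EuclideanSpace ℝ (Fin d) => f v - f 0 :=
      hfc.sub continuous_const
    let A₀ : EuclideanSpace ℝ (Fin d) →+ EuclideanSpace ℝ (Fin n) :=
      { toFun := fun v => f v - f 0
        map_zero' := by simp
        map_add' := hA }
    refine ⟨(A₀.toRealLinearMap hcont).toLinearMap, f 0, fun x => ?_⟩
    have hAx : (A₀.toRealLinearMap hcont) x = f x - f 0 := by
      rw [AddMonoidHom.coe_toRealLinearMap]; rfl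
    show f x = (A₀.toRealLinearMap hcont) x + f 0
    rw [hAx]; abel
  · rintro ⟨A, b, hf⟩
    have hex : ∃ g ∈ G, g ≠ 1 := by
      by_contra h; push_neg at h; exact hG ((Subgroup.eq_bot_iff_forall G).mpr h)
    obtain ⟨g, hg, hg1⟩ := hex
    have hex2 : ∃ x0 : EuclideanSpace ℝ (Fin d), g x0 ≠ x0 := by
      by_contra h; push_neg at h; exact hg1 (LinearIsometryEquiv.ext h)
    obtain ⟨x0, hx0⟩ := hex2
    set v : EuclideanSpace ℝ (Fin d) := g x0 - x0 with hv
    have hvne : v ≠ 0 := sub_ne_zero.mpr hx0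
    refine ⟨v, 0, ?_, ?_⟩
    · have h1 : f (g x0) = f x0 := hinv g hg x0
      rw [hf, hf] at h1
      have h2 : A (g x0) = A x0 := add_right_cancel h1
      have hAv : A v = 0 := by rw [hv, map_sub, h2, sub_self]
      rw [hf, hf, hAv, map_zero]
    · have hlb : ‖v‖ ≤ qd G v 0 := by
        refine le_csInf ⟨dist v 0, v, hone v, 0, hone 0, rfl⟩ ?_
        rintro r ⟨p, hp, q, hq, rfl⟩
        have hq0 : q = 0 := by
          have horb : orbG G (0 : EuclideanSpace ℝ (Fin d)) ⊆ {0} := by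
            rintro y ⟨g', _, rfl⟩; simp
          have := closure_minimal horb isClosed_singleton hq
          simpa using this
        have hpn : ‖p‖ = ‖v‖ := by
          have horb : orbG G v ⊆ Metric.sphere (0 : EuclideanSpace ℝ (Fin d)) ‖v‖ := by
            rintro y ⟨g', _, rfl⟩
            simp [mem_sphere_iff_norm]
          have := closure_minimal horb Metric.isClosed_sphere hp
          rw [mem_sphere_iff_norm, sub_zero] at this
          exact this
        rw [hq0, dist_zero_right, hpn]
      intro h0
      rw [h0] at hlb
      exact hvne (norm_le_zero_iff.mp hlb)
end

section
/- Let G ≤ U(d) be finite abelian, and suppose there is an orthonormal basis {u_i} of ℂ^d with characters χ_i of G satisfying g·u_i = χ_i(g)·u_i for all g, i. Then G acts freely on the unit sphere S(ℂ^d) if and only if each character χ_i is injective (an isomorphism of G onto its image), and this holds if and only if for each pair i, j there exists a smallest integer m_{ij} ≥ 0 with χ_i · χ_j^{m_{ij}} = 1. -/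
/-- for a finite abelian `G ≤ U(d)` simultaneously diagonalized by an
orthonormal basis `{u_i}` with characters `χ_i` (so `g·u_i = χ_i(g)·u_i`), the following
are equivalent: (a) `G` acts freely on `S(ℂ^d)`; (b) each `χ_i` is injective (an
isomorphism onto its image); (c) for each `i, j` there is a smallest integer `m ≥ 0` with
`χ_i·χ_j^m = 1`. -/
theorem free_action_iff_injective_characters
    {d : ℕ}
    (G : Subgroup (EuclideanSpace ℂ (Fin d) ≃ₗᵢ[ℂ] EuclideanSpace ℂ (Fin d)))
    [Finite G] (hab : ∀ g h : G, g * h = h * g)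
    (u : Fin d → EuclideanSpace ℂ (Fin d)) (hu : Orthonormal ℂ u)
    (χ : Fin d → (G →* ℂ))
    (heig : ∀ (g : G) (i : Fin d),
      (g : EuclideanSpace ℂ (Fin d) ≃ₗᵢ[ℂ] EuclideanSpace ℂ (Fin d)) (u i) = χ i g • u i) :
    ((∀ g : G, (∃ x : EuclideanSpace ℂ (Fin d), ‖x‖ = 1 ∧
        (g : EuclideanSpace ℂ (Fin d) ≃ₗᵢ[ℂ] EuclideanSpace ℂ (Fin d)) x = x) → g = 1)
      ↔ (∀ i, Function.Injective (χ i))) ∧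
    ((∀ i, Function.Injective (χ i)) ↔
      (∀ i j : Fin d, ∃ m : ℕ, (∀ g : G, χ i g * (χ j g) ^ m = 1) ∧
        ∀ m' : ℕ, (∀ g : G, χ i g * (χ j g) ^ m' = 1) → m ≤ m')) := by
  classical
  -- key multiplicative fact: χ i (a * b⁻¹) = χ i a * χ i b⁻¹, and χ i b * χ i b⁻¹ = 1
  have hunit : ∀ (i : Fin d) (b : G), χ i b * χ i b⁻¹ = 1 := by
    intro i b
    rw [← map_mul, mul_inv_cancel, map_one]
  -- u is a basis
  have hcard : Fintype.card (Fin d) = Module.finrank ℂ (EuclideanSpace ℂ (Fin d)) := by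
    simp
  by_cases hd : d = 0
  · subst hd
    refine ⟨⟨fun _ i => i.elim0, fun _ g hg => ?_⟩, ⟨fun _ i => i.elim0, fun _ i => i.elim0⟩⟩
    · have : ∀ x : EuclideanSpace ℂ (Fin 0), x = 0 := fun x => Subsingleton.elim x 0
      obtain ⟨x, hx, -⟩ := hg
      rw [this x, norm_zero] at hx
      exact absurd hx (by norm_num)
  have : Nonempty (Fin d) := ⟨⟨0, Nat.pos_of_ne_zero hd⟩⟩
  let b : Module.Basis (Fin d) ℂ (EuclideanSpace ℂ (Fin d)) :=
    basisOfLinearIndependentOfCardEqFinrank hu.linearIndependent hcard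
  have hb : ∀ i, b i = u i := fun i => by
    simp [b, coe_basisOfLinearIndependentOfCardEqFinrank]
  -- (A): if all characters are 1 at g, then g = 1
  have hA : ∀ g : G, (∀ i, χ i g = 1) → g = 1 := by
    intro g hg
    have hlin : ((g : EuclideanSpace ℂ (Fin d) ≃ₗᵢ[ℂ] EuclideanSpace ℂ (Fin d))
        : EuclideanSpace ℂ (Fin d) →ₗ[ℂ] EuclideanSpace ℂ (Fin d)) = LinearMap.id := by
      apply b.ext
      intro i
      simp [hb, heig, hg]
    have : (g : EuclideanSpace ℂ (Fin d) ≃ₗᵢ[ℂ] EuclideanSpace ℂ (Fin d)) = 1 := by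
      apply LinearIsometryEquiv.ext
      intro x
      have := congrArg (fun f => f x) hlin
      simpa using this
    exact Subtype.ext this
  -- (B): if g fixes a unit vector, some character is 1 at g
  have hB : ∀ (g : G) (x : EuclideanSpace ℂ (Fin d)), ‖x‖ = 1 →
      (g : EuclideanSpace ℂ (Fin d) ≃ₗᵢ[ℂ] EuclideanSpace ℂ (Fin d)) x = x →
      ∃ i, χ i g = 1 := by
    intro g x hx hgx
    have hx0 : x ≠ 0 := by
      intro h
      rw [h, norm_zero] at hx
      exact absurd hx (by norm_num)
    have hrepr : b.repr x ≠ 0 := fun h => hx0 (by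
      have := b.repr.map_eq_zero_iff.mp h
      exact this)
    obtain ⟨i, hi⟩ : ∃ i, b.repr x i ≠ 0 := by
      by_contra h
      push_neg at h
      exact hrepr (Finsupp.ext h)
    refine ⟨i, ?_⟩
    have hgy : (g : EuclideanSpace ℂ (Fin d) ≃ₗᵢ[ℂ] EuclideanSpace ℂ (Fin d)) x
        = ∑ k, (b.repr x k * χ k g) • b k := by
      conv_lhs => rw [← b.sum_repr x]
      rw [map_sum]
      refine Finset.sum_congr rfl fun k _ => ?_
      rw [map_smul, hb, heig, smul_smul, ← hb]
    have hcoeff : b.repr x i * χ i g = b.repr x i := by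
      have heq : b.repr (∑ k, (b.repr x k * χ k g) • b k) = b.repr x := by
        rw [← hgy, hgx]
      have h2 := b.repr_sum_self (fun k => b.repr x k * χ k g)
      have h3 : (fun k => b.repr x k * χ k g) = ⇑(b.repr x) := by
        rw [← h2, heq]
      exact congrFun h3 i
    have := mul_left_cancel₀ hi (by rw [hcoeff, mul_one] : b.repr x i * χ i g = b.repr x i * 1)
    exact this
  constructor
  · constructor
    · -- free → injective
      intro hfree i g h hgh
      have h1 : χ i (g * h⁻¹) = 1 := by
        rw [map_mul, hgh]
        exact hunit i h
      have := hfree (g * h⁻¹) ⟨u i, hu.1 i, by rw [heig, h1, one_smul]⟩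
      exact mul_inv_eq_one.mp this
    · -- injective → free
      intro hinj g hg
      obtain ⟨x, hx, hgx⟩ := hg
      obtain ⟨i, hi⟩ := hB g x hx hgx
      exact hinj i (by rw [hi, map_one])
  · constructor
    · -- injective → smallest m
      intro hinj i j
      have hcyc : IsCyclic G := isCyclic_of_subgroup_isDomain (χ j) (hinj j)
      obtain ⟨g₀, hg₀⟩ := hcyc.exists_generator
      set n := orderOf g₀ with hn
      have hnpos : 0 < n := orderOf_pos g₀
      haveI : NeZero n := ⟨hnpos.ne'⟩
      have hζord : orderOf (χ j g₀) = n := orderOf_injective (χ j) (hinj j) g₀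
      have hζ : IsPrimitiveRoot (χ j g₀) n := hζord ▸ IsPrimitiveRoot.orderOf (χ j g₀)
      have hroot : (χ i g₀) ^ n = 1 := by
        rw [← map_pow, pow_orderOf_eq_one, map_one]
      obtain ⟨k, hk, hk2⟩ := hζ.eq_pow_of_pow_eq_one hroot
      have key : χ i g₀ * (χ j g₀) ^ (n - k) = 1 := by
        rw [← hk2, ← pow_add, Nat.add_sub_cancel' hk.le, hζ.pow_eq_one]
      have hex : ∃ m : ℕ, ∀ g : G, χ i g * (χ j g) ^ m = 1 := by
        refine ⟨n - k, fun g => ?_⟩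
        obtain ⟨t, ht⟩ := hg₀ g
        have h1 : χ i g = (χ i g₀) ^ t := by rw [← ht, map_zpow]
        have h2 : χ j g = (χ j g₀) ^ t := by rw [← ht, map_zpow]
        rw [h1, h2, ← zpow_natCast ((χ j g₀) ^ t) (n - k), ← zpow_mul, mul_comm t ((n - k : ℕ) : ℤ),
          zpow_mul, zpow_natCast, ← mul_zpow, key, one_zpow]
      exact ⟨Nat.find hex, Nat.find_spec hex, fun m' hm' => Nat.find_min' hex hm'⟩
    · -- smallest m → injective
      intro h j g h' hgh'
      have h1 : χ j (g * h'⁻¹) = 1 := by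
        rw [map_mul, hgh']
        exact hunit j h'
      have hall : ∀ i, χ i (g * h'⁻¹) = 1 := by
        intro i
        obtain ⟨m, hm, -⟩ := h i j
        have := hm (g * h'⁻¹)
        rwa [h1, one_pow, mul_one] at this
      have := hA _ hall
      exact mul_inv_eq_one.mp this
end
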